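/- arXiv:math/0403204 — 8 statements merged into one kernel-verified Lean document; each statement's English description precedes it below -/
import Mathlib

section
/- Let R be a subring of a ring S, and assume that every semiprime factor ring of R and of S is left or right Goldie and that the prime radical of every factor ring of R and of S is nilpotent. Then for every prime ideal P of S there exists a prime ideal Q of R that is minimal over P ∩ R and satisfies Q^S ⊆ P, where Q^S = ann_S(S/SQ). -/
/-- A two-sided ideal `P` of `A` is prime: it is proper, and for all two-sided ideals
`I, J`, `IJ ⊆ P` implies `I ⊆ P` or `J ⊆ P` (the product condition is expressed
elementwise on generators, which is equivalent since `P` is closed under addition). -/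
def IsPrimeTwoSided {A : Type*} [Ring A] (P : TwoSidedIdeal A) : Prop :=
  P ≠ ⊤ ∧ ∀ I J : TwoSidedIdeal A, (∀ a ∈ I, ∀ b ∈ J, a * b ∈ P) → I ≤ P ∨ J ≤ P

/-- `V_A(X)`: the Zariski-closed subset of `Spec A` determined by `X ⊆ A`. -/
def zarV {A : Type*} [Ring A] (X : Set A) : Set (TwoSidedIdeal A) :=
  {P | IsPrimeTwoSided P ∧ X ⊆ (P : Set A)}

/-- The prime radical of a subset `X ⊆ A`: the intersection of all prime (two-sided)
ideals containing `X`. -/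
def primeRad {A : Type*} [Ring A] (X : Set A) : Set A :=
  {a | ∀ P : TwoSidedIdeal A, IsPrimeTwoSided P → X ⊆ (P : Set A) → a ∈ P}

/-- `Q` is a prime ideal of `A` minimal over the subset `X`. -/
def minimalOver {A : Type*} [Ring A] (X : Set A) (Q : TwoSidedIdeal A) : Prop :=
  IsPrimeTwoSided Q ∧ X ⊆ (Q : Set A) ∧
    ∀ Q' : TwoSidedIdeal A, IsPrimeTwoSided Q' → X ⊆ (Q' : Set A) → Q' ≤ Q → Q' = Q

/-- The canonical correspondence `r : Spec S → Spec R` attached to `f : R →+* S`,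
sending `P` to the set of primes of `R` minimal over `f⁻¹(P)`. -/
def rCorr {R S : Type*} [Ring R] [Ring S] (f : R →+* S) (P : TwoSidedIdeal S) :
    Set (TwoSidedIdeal R) :=
  {Q | minimalOver (f ⁻¹' (P : Set S)) Q}

/-- A (finite) family of submodules is independent: each member meets the supremum of
the others trivially. -/
def FamIndep {R M : Type*} [Ring R] [AddCommGroup M] [Module R M] {k : ℕ}
    (g : Fin k → Submodule R M) : Prop :=
  ∀ i, g i ⊓ (⨆ j ∈ ({i}ᶜ : Set (Fin k)), g j) = ⊥

/-- The uniform (Goldie) dimension of the left `R`-module `M` is at most `n`: every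
independent family of nonzero submodules has at most `n` members. -/
def UDimLE (R M : Type*) [Ring R] [AddCommGroup M] [Module R M] (n : ℕ) : Prop :=
  ∀ (k : ℕ) (g : Fin k → Submodule R M), (∀ i, g i ≠ ⊥) → FamIndep g → k ≤ n

/-- ACC on left annihilators (of subsets) in `A`. -/
def ACCLeftAnn (A : Type*) [Ring A] : Prop :=
  ∀ c : ℕ → Set A, (∀ i, ∃ T : Set A, c i = {a | ∀ t ∈ T, a * t = 0}) →
    (∀ i, c i ⊆ c (i + 1)) → ∃ N, ∀ m, N ≤ m → c m = c N

/-- `A` is a left Goldie ring: finite uniform dimension as a left module over itself and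
ACC on left annihilators. -/
def LeftGoldie (A : Type*) [Ring A] : Prop :=
  (∃ n, UDimLE A A n) ∧ ACCLeftAnn A

/-- `A` is a left or right Goldie ring (right Goldie = the opposite ring is left Goldie). -/
def LeftOrRightGoldie (A : Type*) [Ring A] : Prop :=
  LeftGoldie A ∨ LeftGoldie Aᵐᵒᵖ

/-- The prime radical of the ring `A` (the intersection of all its prime ideals, i.e.
`primeRad ∅`) is nilpotent. -/
def NilpotentPrimeRad (A : Type*) [Ring A] : Prop :=
  ∃ n : ℕ, 0 < n ∧ ∀ l : List A, l.length = n →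
    (∀ x ∈ l, x ∈ primeRad (∅ : Set A)) → l.prod = 0

/-- Every semiprime factor ring of `A` is left or right Goldie. -/
def SemiprimeFactorsGoldie (A : Type*) [Ring A] : Prop :=
  ∀ I : TwoSidedIdeal A, primeRad (I : Set A) = (I : Set A) →
    LeftOrRightGoldie I.ringCon.Quotient

/-- The prime radical of every factor ring of `A` is nilpotent. -/
def FactorRadsNilpotent (A : Type*) [Ring A] : Prop :=
  ∀ I : TwoSidedIdeal A, NilpotentPrimeRad I.ringCon.Quotient

/-- `X ∩ R`: the subset of the subring `R` obtained by intersecting `X ⊆ S` with `R`. -/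
def restrSet {S : Type*} [Ring S] (R : Subring S) (X : Set S) : Set R :=
  Subtype.val ⁻¹' X

/-- `X^S = ann_S(S/SX)` for `X` a subset of the subring `R` of `S`: the annihilator in
`S` of the left `S`-module `S/SX`, where `SX` is the left ideal of `S` generated by
`X`. -/
def extSub {S : Type*} [Ring S] (R : Subring S) (X : Set R) : Set S :=
  {a : S | ∀ s : S, a * s ∈ Ideal.span (Subtype.val '' X)}

/-- `λ` is a left adjoint to `ρ` (subring version): for all closed `V = V_S(J)` and
`W = V_R(I)` (`J`, `I` semiprime), `λV ⊆ W ↔ V ⊆ ρW`, where `λ(V_S(J)) = V_R(J ∩ R)`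
and `ρ(V_R(I)) = V_S(I^S)`. -/
def AdjSub {S : Type*} [Ring S] (R : Subring S) : Prop :=
  ∀ J : TwoSidedIdeal S, primeRad (J : Set S) = (J : Set S) →
  ∀ I : TwoSidedIdeal R, primeRad (I : Set R) = (I : Set R) →
    (zarV (restrSet R (J : Set S)) ⊆ zarV (I : Set R) ↔
      zarV (J : Set S) ⊆ zarV (extSub R (I : Set R)))

section AuxProof
set_option linter.unnecessarySimpa false

open TwoSidedIdeal

section Part1
variable {A : Type*} [Ring A]

lemma aux_eq_top_of_one_mem {I : TwoSidedIdeal A} (h : (1:A) ∈ I) : I = ⊤ := by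
  refine SetLike.ext fun x => ⟨fun _ => trivial, fun _ => ?_⟩
  simpa using I.mul_mem_left x 1 h

lemma aux_one_not_mem {P : TwoSidedIdeal A} (hP : IsPrimeTwoSided P) : (1:A) ∉ P :=
  fun h => hP.1 (aux_eq_top_of_one_mem h)

/-- the pair lemma: `a S b ⊆ P` implies `a ∈ P` or `b ∈ P`. -/
lemma aux_pair {P : TwoSidedIdeal A} (hP : IsPrimeTwoSided P) {a b : A}
    (h : ∀ s, a * s * b ∈ P) : a ∈ P ∨ b ∈ P := by
  have key : ∀ x ∈ span {a}, ∀ y ∈ span {b}, x * y ∈ P := by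
    intro x hx y hy
    rw [mem_span_iff_mem_addSubgroup_closure] at hx hy
    induction hx using AddSubgroup.closure_induction with
    | mem x hx =>
      obtain ⟨p, hp, v, -, rfl⟩ := hx
      obtain ⟨u, -, a', ha', rfl⟩ := hp
      rw [Set.mem_singleton_iff] at ha'; subst ha'
      induction hy using AddSubgroup.closure_induction with
      | mem y hy =>
        obtain ⟨q, hq, z, -, rfl⟩ := hy
        obtain ⟨w, -, b', hb', rfl⟩ := hq
        rw [Set.mem_singleton_iff] at hb'; subst hb'
        have h3 := P.mul_mem_left u _ (P.mul_mem_right _ z (h (v * w)))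
        convert h3 using 1; noncomm_ring
      | zero => simpa using P.zero_mem
      | add y z _ _ hy hz => rw [mul_add]; exact P.add_mem hy hz
      | neg y _ hy => rw [mul_neg]; exact P.neg_mem hy
    | zero => simpa using P.zero_mem
    | add x z _ _ hx hz => rw [add_mul]; exact P.add_mem hx hz
    | neg x _ hx => rw [neg_mul]; exact P.neg_mem hx
  rcases hP.2 (span {a}) (span {b}) key with h1 | h1
  · exact Or.inl (h1 (subset_span rfl))
  · exact Or.inr (h1 (subset_span rfl))

end Part1

section Core

open TwoSidedIdeal Pointwise

variable {A : Type*} [Ring A]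

def auxlAnn (T : Set A) : Set A := {a | ∀ t ∈ T, a * t = 0}

def auxlAnnI (I : TwoSidedIdeal A) : TwoSidedIdeal A :=
  TwoSidedIdeal.mk' (auxlAnn (I : Set A))
    (fun t _ => zero_mul t)
    (fun {x y} hx hy t ht => by rw [add_mul, hx t ht, hy t ht, add_zero])
    (fun {x} hx t ht => by rw [neg_mul, hx t ht, neg_zero])
    (fun {x y} hy t ht => by rw [mul_assoc, hy t ht, mul_zero])
    (fun {x y} hx t ht => by rw [mul_assoc]; exact hx _ (I.mul_mem_left y t ht))

lemma mem_auxlAnnI {I : TwoSidedIdeal A} {x : A} :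
    x ∈ auxlAnnI I ↔ ∀ t ∈ (I : Set A), x * t = 0 := by
  exact TwoSidedIdeal.mem_mk' _ _ _ _ _ _ x

lemma coe_auxlAnnI (I : TwoSidedIdeal A) : (auxlAnnI I : Set A) = auxlAnn (I : Set A) :=
  TwoSidedIdeal.coe_mk' _ _ _ _ _ _

section hy

lemma aux_flip (hy : ∀ y : A, (∀ b, y * b * y = 0) → y = 0) {I : TwoSidedIdeal A} {a : A} (h : ∀ t ∈ I, a * t = 0) :
    ∀ t ∈ I, t * a = 0 := by
  intro t ht
  apply hy
  intro b
  have h1 : a * (b * t) = 0 := h _ (I.mul_mem_left b t ht)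
  calc t * a * b * (t * a) = t * (a * (b * t)) * a := by noncomm_ring
  _ = 0 := by rw [h1, mul_zero, zero_mul]

lemma aux_flip' (hy : ∀ y : A, (∀ b, y * b * y = 0) → y = 0) {I : TwoSidedIdeal A} {a : A} (h : ∀ t ∈ I, t * a = 0) :
    ∀ t ∈ I, a * t = 0 := by
  intro t ht
  apply hy
  intro b
  have h1 : (t * b) * a = 0 := h _ (I.mul_mem_right t b ht)
  calc a * t * b * (a * t) = a * ((t * b) * a) * t := by noncomm_ring
  _ = 0 := by rw [h1, mul_zero, zero_mul]

lemma aux_absorb (I U : TwoSidedIdeal A) {z : A} :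
    z ∈ TwoSidedIdeal.span ((I : Set A) * (U : Set A)) ↔
      z ∈ AddSubgroup.closure ((I : Set A) * (U : Set A)) := by
  refine mem_span_iff_mem_addSubgroup_closure_absorbing ?_ ?_
  · rintro x - ⟨i, hi, u, hu, rfl⟩
    exact ⟨x * i, I.mul_mem_left x i hi, u, hu, mul_assoc x i u⟩
  · rintro - x ⟨i, hi, u, hu, rfl⟩
    exact ⟨i, hi, u * x, U.mul_mem_right u x hu, (mul_assoc i u x).symm⟩

lemma aux_span_mul_left (hy : ∀ y : A, (∀ b, y * b * y = 0) → y = 0) {I U : TwoSidedIdeal A} {a : A} (h : ∀ t ∈ I, a * t = 0) :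
    ∀ x ∈ TwoSidedIdeal.span ((I : Set A) * (U : Set A)), a * x = 0 := by
  intro x hx
  rw [aux_absorb] at hx
  induction hx using AddSubgroup.closure_induction with
  | mem x hx =>
    obtain ⟨i, hi, u, hu, rfl⟩ := hx
    rw [← mul_assoc, h i hi, zero_mul]
  | zero => exact mul_zero a
  | add x y _ _ hx hy' => rw [mul_add, hx, hy', add_zero]
  | neg x _ hx => rw [mul_neg, hx, neg_zero]

lemma aux_span_mul_right (hy : ∀ y : A, (∀ b, y * b * y = 0) → y = 0) {I U : TwoSidedIdeal A} {v : A}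
    (h : ∀ u ∈ U, ∀ t ∈ I, (u * v) * t = 0) :
    ∀ x ∈ TwoSidedIdeal.span ((I : Set A) * (U : Set A)), x * v = 0 := by
  intro x hx
  rw [aux_absorb] at hx
  induction hx using AddSubgroup.closure_induction with
  | mem x hx =>
    obtain ⟨i, hi, u, hu, rfl⟩ := hx
    have h1 : ∀ t ∈ I, t * (u * v) = 0 := aux_flip hy (h u hu)
    rw [mul_assoc, h1 i hi]
  | zero => exact zero_mul v
  | add x y _ _ hx hy' => rw [add_mul, hx, hy', add_zero]
  | neg x _ hx => rw [neg_mul, hx, neg_zero]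

/-- The family of left annihilators of nonzero two-sided ideals. -/
def auxFF (A : Type*) [Ring A] : Set (Set A) :=
  {T | ∃ I : TwoSidedIdeal A, I ≠ ⊥ ∧ T = auxlAnn (I : Set A)}

lemma aux_max_exists (hacc : ACCLeftAnn A) {T₀ : Set A} (h0 : T₀ ∈ auxFF A) :
    ∃ T ∈ auxFF A, T₀ ⊆ T ∧ ∀ T' ∈ auxFF A, T ⊆ T' → T' = T := by
  by_contra hcon
  push_neg at hcon
  have step : ∀ g : {T // T ∈ auxFF A ∧ T₀ ⊆ T},
      ∃ g' : {T // T ∈ auxFF A ∧ T₀ ⊆ T}, g.1 ⊆ g'.1 ∧ g'.1 ≠ g.1 := by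
    rintro ⟨T, hT, hT0⟩
    obtain ⟨T', hT', hsub, hne⟩ := hcon T hT hT0
    exact ⟨⟨T', hT', hT0.trans hsub⟩, hsub, hne⟩
  choose f hf1 hf2 using step
  let seq : ℕ → {T // T ∈ auxFF A ∧ T₀ ⊆ T} := fun n =>
    Nat.rec ⟨T₀, h0, subset_rfl⟩ (fun _ g => f g) n
  have hform : ∀ i, ∃ Tset : Set A, (seq i).1 = {a | ∀ t ∈ Tset, a * t = 0} := by
    intro i
    obtain ⟨I, -, hEq⟩ := (seq i).2.1
    exact ⟨(I : Set A), hEq⟩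
  obtain ⟨N, hN⟩ := hacc (fun i => (seq i).1) hform (fun i => hf1 _)
  exact hf2 (seq N) (hN (N + 1) (Nat.le_succ N))

lemma aux_max_prime (hy : ∀ y : A, (∀ b, y * b * y = 0) → y = 0) {I : TwoSidedIdeal A} (hI : I ≠ ⊥)
    (hmax : ∀ T' ∈ auxFF A, auxlAnn (I : Set A) ⊆ T' → T' = auxlAnn (I : Set A)) :
    IsPrimeTwoSided (auxlAnnI I) := by
  constructor
  · intro htop
    apply hI
    refine SetLike.ext fun t => ⟨fun ht => ?_, fun ht => ?_⟩
    · have h1 : (1 : A) ∈ auxlAnnI I := by rw [htop]; trivial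
      rw [mem_auxlAnnI] at h1
      rw [TwoSidedIdeal.mem_bot, ← one_mul t]
      exact h1 t ht
    · rw [TwoSidedIdeal.mem_bot] at ht
      rw [ht]; exact I.zero_mem
  · intro U V hUV
    by_cases hU : U ≤ auxlAnnI I
    · exact Or.inl hU
    right
    rw [SetLike.le_def] at hU
    push_neg at hU
    obtain ⟨u, hu, hunot⟩ := hU
    have hu' : ∃ i ∈ I, i * u ≠ 0 := by
      by_contra hc
      push_neg at hc
      refine hunot ?_
      rw [mem_auxlAnnI]
      exact fun t ht => aux_flip' hy hc t ht
    obtain ⟨i₁, hi₁, hne⟩ := hu'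
    set K := TwoSidedIdeal.span ((I : Set A) * (U : Set A)) with hK
    have hKne : K ≠ ⊥ := by
      intro hbot
      apply hne
      have hmem : i₁ * u ∈ K := TwoSidedIdeal.subset_span ⟨i₁, hi₁, u, hu, rfl⟩
      rwa [hbot, TwoSidedIdeal.mem_bot] at hmem
    have hsub1 : auxlAnn (I : Set A) ⊆ auxlAnn (K : Set A) :=
      fun a ha x hx => aux_span_mul_left hy ha x hx
    have hsub2 : ∀ v ∈ V, v ∈ auxlAnn (K : Set A) := by
      intro v hv
      have step1 : ∀ x ∈ K, x * v = 0 := by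
        refine aux_span_mul_right hy ?_
        intro u' hu' t ht
        have huv : u' * v ∈ auxlAnnI I := hUV u' hu' v hv
        rw [mem_auxlAnnI] at huv
        exact huv t ht
      exact fun x hx => aux_flip' hy step1 x hx
    have heq : auxlAnn (K : Set A) = auxlAnn (I : Set A) :=
      hmax _ ⟨K, hKne, rfl⟩ hsub1
    intro v hv
    rw [mem_auxlAnnI]
    have := hsub2 v hv
    rw [heq] at this
    exact this

theorem aux_core (hy : ∀ y : A, (∀ b, y * b * y = 0) → y = 0) (hacc : ACCLeftAnn A) :
    ∃ l : List (TwoSidedIdeal A), (∀ Pr ∈ l, IsPrimeTwoSided Pr) ∧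
      ∀ x : A, (∀ Pr ∈ l, x ∈ Pr) → x = 0 := by
  classical
  set M : Set (Set A) := {T | T ∈ auxFF A ∧ ∀ T' ∈ auxFF A, T ⊆ T' → T' = T} with hMdef
  have hchoice : ∀ T ∈ M, ∃ Pr : TwoSidedIdeal A, IsPrimeTwoSided Pr ∧ (Pr : Set A) = T := by
    rintro T ⟨⟨I, hIne, rfl⟩, hmax⟩
    exact ⟨auxlAnnI I, aux_max_prime hy hIne hmax, coe_auxlAnnI I⟩
  have hMfin : M.Finite := by
    rw [← Set.not_infinite]
    intro hinf
    let e := hinf.natEmbedding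
    have hdata : ∀ n : ℕ, ∃ I : TwoSidedIdeal A, I ≠ ⊥ ∧
        ((e n : Set A) = auxlAnn (I : Set A)) := fun n => (e n).2.1
    choose Ifun hIne hIeq using hdata
    have hmax' : ∀ n, ∀ T' ∈ auxFF A, auxlAnn ((Ifun n : TwoSidedIdeal A) : Set A) ⊆ T' →
        T' = auxlAnn ((Ifun n : TwoSidedIdeal A) : Set A) := by
      intro n
      rw [← hIeq n]
      exact (e n).2.2
    have hprime : ∀ n, IsPrimeTwoSided (auxlAnnI (Ifun n)) :=
      fun n => aux_max_prime hy (hIne n) (hmax' n)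
    set C : ℕ → Set A := fun n => auxlAnn ((e n : Set A)) with hCdef
    have hCnz : ∀ n, ∃ c ∈ C n, c ≠ 0 := by
      intro n
      have hex : ∃ i ∈ Ifun n, i ≠ (0 : A) := by
        by_contra hc
        push_neg at hc
        apply hIne n
        refine SetLike.ext fun t => ⟨fun ht => ?_, fun ht => ?_⟩
        · rw [TwoSidedIdeal.mem_bot]; exact hc t ht
        · rw [TwoSidedIdeal.mem_bot] at ht; rw [ht]; exact (Ifun n).zero_mem
      obtain ⟨i, hi, hine⟩ := hex
      refine ⟨i, ?_, hine⟩
      intro a ha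
      rw [hIeq n] at ha
      exact aux_flip hy ha i hi
    have hCsub : ∀ m m', m ≠ m' → C m ⊆ (e m' : Set A) := by
      intro m m' hnemm
      have hnotle : ¬ ((e m : Set A) ⊆ (e m' : Set A)) := by
        intro hsub
        have h1 : (e m' : Set A) = (e m : Set A) := (e m).2.2 _ (e m').2.1 hsub
        exact hnemm (e.injective (Subtype.ext h1)).symm
      have helem : ∀ a ∈ auxlAnnI (auxlAnnI (Ifun m)), ∀ b ∈ auxlAnnI (Ifun m),
          a * b ∈ auxlAnnI (Ifun m') := by
        intro a ha b hb
        rw [mem_auxlAnnI] at ha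
        have : a * b = 0 := ha b hb
        rw [this]; exact (auxlAnnI (Ifun m')).zero_mem
      rcases (hprime m').2 _ _ helem with hle | hle
      · intro c hc
        have hc' : c ∈ auxlAnnI (auxlAnnI (Ifun m)) := by
          rw [mem_auxlAnnI]
          intro t ht
          rw [coe_auxlAnnI, ← hIeq m] at ht
          exact hc t ht
        have h2 := hle hc'
        rw [hIeq m', ← coe_auxlAnnI]
        exact h2
      · exfalso
        apply hnotle
        intro x hx
        rw [hIeq m, ← coe_auxlAnnI] at hx
        rw [hIeq m', ← coe_auxlAnnI]
        exact hle hx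
    have horth : ∀ m m', m ≠ m' → ∀ x ∈ C m, ∀ y ∈ C m', y * x = 0 := by
      intro m m' hnemm x hx y hyC
      exact hyC x (hCsub m m' hnemm hx)
    set T : ℕ → Set A := fun n => {t | ∃ j, n + 1 ≤ j ∧ t ∈ C j} with hTdef
    have hmono : ∀ n, auxlAnn (T n) ⊆ auxlAnn (T (n + 1)) := by
      intro n a ha t ht
      obtain ⟨j, hj, htj⟩ := ht
      exact ha t ⟨j, by omega, htj⟩
    obtain ⟨N, hNstab⟩ := hacc (fun n => auxlAnn (T n)) (fun n => ⟨T n, rfl⟩) hmono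
    obtain ⟨c, hcC, hcne⟩ := hCnz (N + 1)
    apply hcne
    have h1 : c ∈ auxlAnn (T (N + 1)) := by
      intro t ht
      obtain ⟨j, hj, htj⟩ := ht
      exact horth j (N + 1) (by omega) t htj c hcC
    have h2 : c ∈ auxlAnn (T N) := by
      rw [← hNstab (N + 1) (Nat.le_succ N)]
      exact h1
    have hself : ∀ c' ∈ C (N + 1), c * c' = 0 := fun c' hc' => h2 c' ⟨N + 1, le_refl _, hc'⟩
    apply hy
    intro b
    have hbc : b * c ∈ C (N + 1) := by
      intro t ht
      rw [mul_assoc, hcC t ht, mul_zero]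
    calc c * b * c = c * (b * c) := by rw [mul_assoc]
    _ = 0 := hself _ hbc
  choose! Pf hPf1 hPf2 using hchoice
  have hmemT : ∀ T : Set A, T ∈ hMfin.toFinset.toList ↔ T ∈ M := fun T => by
    rw [Finset.mem_toList, Set.Finite.mem_toFinset]
  refine ⟨hMfin.toFinset.toList.map Pf, ?_, ?_⟩
  · intro Pr hPr
    rw [List.mem_map] at hPr
    obtain ⟨T, hT, rfl⟩ := hPr
    exact hPf1 T ((hmemT T).1 hT)
  · intro x hx
    by_contra hxne
    let Z : TwoSidedIdeal A := TwoSidedIdeal.mk' {z | ∀ T ∈ M, z ∈ Pf T}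
      (fun T hT => (Pf T).zero_mem)
      (fun {a b} ha hb T hT => (Pf T).add_mem (ha T hT) (hb T hT))
      (fun {a} ha T hT => (Pf T).neg_mem (ha T hT))
      (fun {a b} hb T hT => (Pf T).mul_mem_left a b (hb T hT))
      (fun {a b} ha T hT => (Pf T).mul_mem_right a b (ha T hT))
    have hmemZ : ∀ z : A, z ∈ Z ↔ ∀ T ∈ M, z ∈ Pf T := fun z =>
      TwoSidedIdeal.mem_mk' _ _ _ _ _ _ z
    have hxZ : x ∈ Z := by
      rw [hmemZ]
      intro T hT
      exact hx _ (List.mem_map.2 ⟨T, (hmemT T).2 hT, rfl⟩)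
    have hZne : Z ≠ ⊥ := by
      intro hbot
      rw [hbot, TwoSidedIdeal.mem_bot] at hxZ
      exact hxne hxZ
    obtain ⟨Tm, hTmF, hsubm, hmaxm⟩ := aux_max_exists hacc (T₀ := auxlAnn (Z : Set A))
      ⟨Z, hZne, rfl⟩
    have hTmM : Tm ∈ M := ⟨hTmF, hmaxm⟩
    obtain ⟨Im, hImne, hTmeq⟩ := hTmF
    have hZT : (Z : Set A) ⊆ Tm := by
      intro z hz
      rw [← hPf2 Tm hTmM]
      rw [SetLike.mem_coe, hmemZ] at hz
      exact hz Tm hTmM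
    have hIsub : ∀ i ∈ Im, ∀ z ∈ Z, i * z = 0 := by
      intro i hi
      have hzi : ∀ z ∈ Z, z * i = 0 := by
        intro z hz
        have hzT : z ∈ Tm := hZT hz
        rw [hTmeq] at hzT
        exact hzT i hi
      exact fun z hz => aux_flip' hy hzi z hz
    apply hImne
    refine SetLike.ext fun i => ⟨fun hi => ?_, fun hi => ?_⟩
    · have hmem1 : i ∈ auxlAnn (Z : Set A) := fun z hz => hIsub i hi z hz
      have hmem2 : i ∈ Tm := hsubm hmem1
      rw [hTmeq] at hmem2
      rw [TwoSidedIdeal.mem_bot]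
      apply hy
      intro b
      have hbi : b * i ∈ Im := Im.mul_mem_left b i hi
      calc i * b * i = i * (b * i) := by rw [mul_assoc]
      _ = 0 := hmem2 _ hbi
    · rw [TwoSidedIdeal.mem_bot] at hi
      rw [hi]; exact Im.zero_mem

end hy

end Core

section Part3

open TwoSidedIdeal

variable {A B : Type*} [Ring A] [Ring B]

def auxFwd (f : A →+* B) (hf : Function.Surjective f) (K : TwoSidedIdeal A) :
    TwoSidedIdeal B :=
  TwoSidedIdeal.mk' (f '' (K : Set A))
    ⟨0, K.zero_mem, map_zero f⟩
    (fun {x y} hx hy => by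
      obtain ⟨a, ha, rfl⟩ := hx; obtain ⟨b, hb, rfl⟩ := hy
      exact ⟨a + b, K.add_mem ha hb, map_add f a b⟩)
    (fun {x} hx => by
      obtain ⟨a, ha, rfl⟩ := hx
      exact ⟨-a, K.neg_mem ha, map_neg f a⟩)
    (fun {x y} hy => by
      obtain ⟨a, ha, rfl⟩ := hy; obtain ⟨s, rfl⟩ := hf x
      exact ⟨s * a, K.mul_mem_left s a ha, map_mul f s a⟩)
    (fun {x y} hx => by
      obtain ⟨a, ha, rfl⟩ := hx; obtain ⟨s, rfl⟩ := hf y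
      exact ⟨a * s, K.mul_mem_right a s ha, map_mul f a s⟩)

lemma mem_auxFwd {f : A →+* B} {hf : Function.Surjective f} {K : TwoSidedIdeal A} {x : B} :
    x ∈ auxFwd f hf K ↔ x ∈ f '' (K : Set A) := by
  exact TwoSidedIdeal.mem_mk' _ _ _ _ _ _ x

lemma aux_comap_prime (f : A →+* B) (hf : Function.Surjective f)
    {Pr : TwoSidedIdeal B} (hPr : IsPrimeTwoSided Pr) :
    IsPrimeTwoSided (TwoSidedIdeal.comap f Pr) := by
  constructor
  · intro htop
    apply hPr.1
    apply aux_eq_top_of_one_mem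
    have h1 : (1 : A) ∈ TwoSidedIdeal.comap f Pr := by rw [htop]; trivial
    rw [TwoSidedIdeal.mem_comap f, map_one] at h1
    exact h1
  · intro I J hIJ
    have helem : ∀ a ∈ auxFwd f hf I, ∀ b ∈ auxFwd f hf J, a * b ∈ Pr := by
      intro a ha b hb
      rw [mem_auxFwd] at ha hb
      obtain ⟨x, hx, rfl⟩ := ha; obtain ⟨y, hy, rfl⟩ := hb
      rw [← map_mul]
      exact (TwoSidedIdeal.mem_comap f).1 (hIJ x hx y hy)
    rcases hPr.2 _ _ helem with hle | hle
    · refine Or.inl fun x hx => ?_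
      exact (TwoSidedIdeal.mem_comap f).2 (hle (mem_auxFwd.2 ⟨x, hx, rfl⟩))
    · refine Or.inr fun x hx => ?_
      exact (TwoSidedIdeal.mem_comap f).2 (hle (mem_auxFwd.2 ⟨x, hx, rfl⟩))

def auxFromOp (Q : TwoSidedIdeal Aᵐᵒᵖ) : TwoSidedIdeal A :=
  TwoSidedIdeal.mk' {x | MulOpposite.op x ∈ Q}
    (by simp only [Set.mem_setOf_eq, MulOpposite.op_zero]; exact Q.zero_mem)
    (fun {x y} hx hy => by
      simp only [Set.mem_setOf_eq, MulOpposite.op_add] at *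
      exact Q.add_mem hx hy)
    (fun {x} hx => by
      simp only [Set.mem_setOf_eq, MulOpposite.op_neg] at *
      exact Q.neg_mem hx)
    (fun {x y} hy => by
      simp only [Set.mem_setOf_eq, MulOpposite.op_mul] at *
      exact Q.mul_mem_right _ _ hy)
    (fun {x y} hx => by
      simp only [Set.mem_setOf_eq, MulOpposite.op_mul] at *
      exact Q.mul_mem_left _ _ hx)

lemma mem_auxFromOp {Q : TwoSidedIdeal Aᵐᵒᵖ} {x : A} :
    x ∈ auxFromOp Q ↔ MulOpposite.op x ∈ Q := by
  rw [auxFromOp, TwoSidedIdeal.mem_mk']; rfl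

def auxToOp (I : TwoSidedIdeal A) : TwoSidedIdeal Aᵐᵒᵖ :=
  TwoSidedIdeal.mk' {q | MulOpposite.unop q ∈ I}
    (by simp only [Set.mem_setOf_eq, MulOpposite.unop_zero]; exact I.zero_mem)
    (fun {x y} hx hy => by
      simp only [Set.mem_setOf_eq, MulOpposite.unop_add] at *
      exact I.add_mem hx hy)
    (fun {x} hx => by
      simp only [Set.mem_setOf_eq, MulOpposite.unop_neg] at *
      exact I.neg_mem hx)
    (fun {x y} hy => by
      simp only [Set.mem_setOf_eq, MulOpposite.unop_mul] at *
      exact I.mul_mem_right _ _ hy)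
    (fun {x y} hx => by
      simp only [Set.mem_setOf_eq, MulOpposite.unop_mul] at *
      exact I.mul_mem_left _ _ hx)

lemma mem_auxToOp {I : TwoSidedIdeal A} {q : Aᵐᵒᵖ} :
    q ∈ auxToOp I ↔ MulOpposite.unop q ∈ I := by
  rw [auxToOp, TwoSidedIdeal.mem_mk']; rfl

lemma aux_fromOp_prime {Q : TwoSidedIdeal Aᵐᵒᵖ} (hQ : IsPrimeTwoSided Q) :
    IsPrimeTwoSided (auxFromOp Q) := by
  constructor
  · intro htop
    apply hQ.1
    apply aux_eq_top_of_one_mem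
    have h1 : (1 : A) ∈ auxFromOp Q := by rw [htop]; trivial
    rw [mem_auxFromOp, MulOpposite.op_one] at h1
    exact h1
  · intro I J hIJ
    have helem : ∀ a ∈ auxToOp J, ∀ b ∈ auxToOp I, a * b ∈ Q := by
      intro a ha b hb
      rw [mem_auxToOp] at ha hb
      have h1 : MulOpposite.unop b * MulOpposite.unop a ∈ auxFromOp Q :=
        hIJ _ hb _ ha
      rw [mem_auxFromOp, MulOpposite.op_mul, MulOpposite.op_unop, MulOpposite.op_unop] at h1
      exact h1
    rcases hQ.2 _ _ helem with hle | hle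
    · refine Or.inr fun x hx => ?_
      rw [mem_auxFromOp]
      exact hle (mem_auxToOp.2 (by rw [MulOpposite.unop_op]; exact hx))
    · refine Or.inl fun x hx => ?_
      rw [mem_auxFromOp]
      exact hle (mem_auxToOp.2 (by rw [MulOpposite.unop_op]; exact hx))

lemma aux_hy_op (hy : ∀ y : A, (∀ b, y * b * y = 0) → y = 0) :
    ∀ y : Aᵐᵒᵖ, (∀ b, y * b * y = 0) → y = 0 := by
  intro y h
  rw [← MulOpposite.op_unop y]
  rw [show (0 : Aᵐᵒᵖ) = MulOpposite.op 0 from rfl]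
  congr 1
  apply hy
  intro b
  have h1 := h (MulOpposite.op b)
  have h2 : y * MulOpposite.op b * y = MulOpposite.op (MulOpposite.unop y * b * MulOpposite.unop y) := by
    rw [MulOpposite.op_mul, MulOpposite.op_mul, MulOpposite.op_unop]
    noncomm_ring
  rw [h2] at h1
  exact MulOpposite.op_injective (by rw [h1]; rfl)

lemma aux_mk_surjective (c : RingCon A) : Function.Surjective (RingCon.mk' c) :=
  fun q => Quotient.inductionOn' q (fun x => ⟨x, rfl⟩)

lemma aux_mem_iff_mk_zero (I : TwoSidedIdeal A) (x : A) :
    RingCon.mk' I.ringCon x = 0 ↔ x ∈ I := by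
  rw [TwoSidedIdeal.mem_iff]
  rw [show RingCon.mk' I.ringCon x = (x : I.ringCon.Quotient) from rfl]
  rw [← I.ringCon.coe_zero, I.ringCon.eq]

lemma aux_rad_push (I : TwoSidedIdeal A) {x : A} (hx : x ∈ primeRad (I : Set A)) :
    RingCon.mk' I.ringCon x ∈ primeRad (∅ : Set I.ringCon.Quotient) := by
  intro Pr' hPr' _
  have hc := aux_comap_prime (RingCon.mk' I.ringCon) (aux_mk_surjective _) hPr'
  have hsub : (I : Set A) ⊆ ((TwoSidedIdeal.comap (RingCon.mk' I.ringCon) Pr') : Set A) := by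
    intro t ht
    rw [SetLike.mem_coe, TwoSidedIdeal.mem_comap (RingCon.mk' I.ringCon)]
    have h0 : RingCon.mk' I.ringCon t = 0 := (aux_mem_iff_mk_zero I t).2 ht
    rw [h0]
    exact Pr'.zero_mem
  have hmem := hx _ hc hsub
  rwa [TwoSidedIdeal.mem_comap (RingCon.mk' I.ringCon)] at hmem

lemma aux_nilpotent (I : TwoSidedIdeal A) (h : NilpotentPrimeRad I.ringCon.Quotient) :
    ∃ n : ℕ, 0 < n ∧ ∀ l : List A, l.length = n →
      (∀ x ∈ l, x ∈ primeRad (I : Set A)) → l.prod ∈ I := by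
  obtain ⟨n, hn0, hn⟩ := h
  refine ⟨n, hn0, fun l hlen hmem => ?_⟩
  have h1 := hn (l.map (RingCon.mk' I.ringCon)) (by rw [List.length_map]; exact hlen)
    (fun x hx => by
      obtain ⟨r, hr, rfl⟩ := List.mem_map.1 hx
      exact aux_rad_push I (hmem r hr))
  rw [← map_list_prod] at h1
  exact (aux_mem_iff_mk_zero I _).1 h1

lemma aux_quot_hy (NI : TwoSidedIdeal A) {X : Set A} (hcar : (NI : Set A) = primeRad X) :
    ∀ y : NI.ringCon.Quotient, (∀ b, y * b * y = 0) → y = 0 := by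
  intro y hb
  obtain ⟨x, rfl⟩ := aux_mk_surjective NI.ringCon y
  rw [aux_mem_iff_mk_zero NI x, ← SetLike.mem_coe, hcar]
  intro Pr hPr hXPr
  have hkey : ∀ s, x * s * x ∈ Pr := by
    intro s
    have h0 : RingCon.mk' NI.ringCon (x * s * x) = 0 := by
      rw [map_mul, map_mul]
      exact hb (RingCon.mk' NI.ringCon s)
    have hxsx : x * s * x ∈ NI := (aux_mem_iff_mk_zero _ _).1 h0
    have hxsx' : x * s * x ∈ primeRad X := by
      rw [← hcar]; exact hxsx
    exact hxsx' Pr hPr hXPr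
  rcases aux_pair hPr hkey with h | h
  · exact h
  · exact h

end Part3

section Part4

open TwoSidedIdeal

variable {S : Type*} [Ring S] {R : Subring S}

def auxLPS (R : Subring S) (Qs : List (TwoSidedIdeal R)) : Set R :=
  {r | ∃ qs : List R, List.Forall₂ (fun q Q => q ∈ Q) qs Qs ∧ r = qs.prod}

lemma aux_extSub_mul {X : Set R} {a u : S} (ha : a ∈ extSub R X) : a * u ∈ extSub R X :=
  fun s => by rw [mul_assoc]; exact ha (u * s)

lemma aux_spanmul {Q : TwoSidedIdeal R} {Qs : List (TwoSidedIdeal R)} {z : S} {r : R}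
    (hz : z ∈ Ideal.span (Subtype.val '' ((Q : Set R))))
    (hr : r ∈ auxLPS R Qs) :
    z * (r : S) ∈ Ideal.span (Subtype.val '' auxLPS R (Q :: Qs)) := by
  induction hz using Submodule.span_induction with
  | mem w hw =>
    obtain ⟨t, ht, rfl⟩ := hw
    have hco : (t : S) * (r : S) = ((t * r : R) : S) := rfl
    rw [hco]
    apply Ideal.subset_span
    refine ⟨t * r, ?_, rfl⟩
    obtain ⟨qs, hqs, rfl⟩ := hr
    exact ⟨t :: qs, List.Forall₂.cons ht hqs, (List.prod_cons).symm⟩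
  | zero => rw [zero_mul]; exact Submodule.zero_mem _
  | add x y _ _ hx hy => rw [add_mul]; exact Submodule.add_mem _ hx hy
  | smul c x _ hx =>
    rw [smul_eq_mul, mul_assoc]
    exact Ideal.mul_mem_left _ c hx

lemma aux_ext_step {Q : TwoSidedIdeal R} {Qs : List (TwoSidedIdeal R)} {y : S}
    (hy' : y ∈ Ideal.span (Subtype.val '' auxLPS R Qs)) :
    ∀ a ∈ extSub R (Q : Set R), a * y ∈ Ideal.span (Subtype.val '' auxLPS R (Q :: Qs)) := by
  induction hy' using Submodule.span_induction with
  | mem w hw =>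
    intro a ha
    obtain ⟨r, hr, rfl⟩ := hw
    have h1 : a ∈ Ideal.span (Subtype.val '' (Q : Set R)) := by
      have := ha 1
      rwa [mul_one] at this
    exact aux_spanmul h1 hr
  | zero => intro a _; rw [mul_zero]; exact Submodule.zero_mem _
  | add x y _ _ ihx ihy =>
    intro a ha
    rw [mul_add]
    exact Submodule.add_mem _ (ihx a ha) (ihy a ha)
  | smul c x _ ih =>
    intro a ha
    rw [smul_eq_mul, ← mul_assoc]
    exact ih (a * c) (aux_extSub_mul ha)

lemma aux_chain : ∀ (Qs : List (TwoSidedIdeal R)) (as : List S),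
    List.Forall₂ (fun (a : S) (Q : TwoSidedIdeal R) => a ∈ extSub R (Q : Set R)) as Qs →
    ∀ s : S, as.prod * s ∈ Ideal.span (Subtype.val '' auxLPS R Qs) := by
  intro Qs
  induction Qs with
  | nil =>
    intro as h s
    rw [List.forall₂_nil_right_iff.1 h, List.prod_nil, one_mul]
    have h1 : ((1 : R) : S) ∈ Subtype.val '' auxLPS R ([] : List (TwoSidedIdeal R)) :=
      ⟨1, ⟨[], List.Forall₂.nil, (List.prod_nil).symm⟩, rfl⟩
    have h2 := Ideal.mul_mem_left (Ideal.span (Subtype.val '' auxLPS R ([] : List (TwoSidedIdeal R))))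
      s (Ideal.subset_span h1)
    simpa using h2
  | cons Q Qs' ih =>
    intro as h s
    obtain ⟨a, as', ha, htail, rfl⟩ := List.forall₂_cons_right_iff.1 h
    rw [List.prod_cons, mul_assoc]
    exact aux_ext_step (ih as' htail s) a ha

lemma aux_span_le {T : Set R} {P : TwoSidedIdeal S} (h : ∀ r ∈ T, (r : S) ∈ P) :
    ∀ y ∈ Ideal.span (Subtype.val '' T), y ∈ P := by
  intro y hy'
  induction hy' using Submodule.span_induction with
  | mem w hw => obtain ⟨r, hr, rfl⟩ := hw; exact h r hr
  | zero => exact P.zero_mem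
  | add x y _ _ hx hy => exact P.add_mem hx hy
  | smul c x _ hx => rw [smul_eq_mul]; exact P.mul_mem_left c x hx

lemma aux_prod_mem_of_forall₂ : ∀ (Ql : List (TwoSidedIdeal R)) (qs : List R),
    List.Forall₂ (fun q Q => q ∈ Q) qs Ql → ∀ I ∈ Ql, qs.prod ∈ I := by
  intro Ql
  induction Ql with
  | nil => intro qs h I hI; exact absurd hI List.not_mem_nil
  | cons Q Ql' ih =>
    intro qs h I hI
    obtain ⟨q, qs', hq, htail, rfl⟩ := List.forall₂_cons_right_iff.1 h
    rw [List.prod_cons]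
    rcases List.mem_cons.1 hI with rfl | hI'
    · exact I.mul_mem_right _ _ hq
    · exact I.mul_mem_left _ _ (ih qs' htail I hI')

lemma aux_forall₂_append_split {α β : Type*} {r : α → β → Prop} :
    ∀ (l₁ l₂ : List β) (qs : List α), List.Forall₂ r qs (l₁ ++ l₂) →
      ∃ a b, qs = a ++ b ∧ List.Forall₂ r a l₁ ∧ List.Forall₂ r b l₂ := by
  intro l₁
  induction l₁ with
  | nil => intro l₂ qs h; exact ⟨[], qs, rfl, List.Forall₂.nil, h⟩
  | cons x l₁' ih =>
    intro l₂ qs h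
    rw [List.cons_append] at h
    obtain ⟨q, qs', hq, htail, rfl⟩ := List.forall₂_cons_right_iff.1 h
    obtain ⟨a, b, rfl, h1, h2⟩ := ih l₂ qs' htail
    exact ⟨q :: a, b, rfl, List.Forall₂.cons hq h1, h2⟩

lemma aux_PP {P : TwoSidedIdeal S} (hP : IsPrimeTwoSided P) :
    ∀ l : List (Set S), (∀ E ∈ l, ∀ a ∈ E, ∀ s, a * s ∈ E) →
      (∀ as : List S, List.Forall₂ (· ∈ ·) as l → as.prod ∈ P) →
      ∃ E ∈ l, E ⊆ (P : Set S) := by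
  intro l
  induction l with
  | nil =>
    intro _ h
    refine absurd (aux_eq_top_of_one_mem ?_) hP.1
    have := h [] List.Forall₂.nil
    rwa [List.prod_nil] at this
  | cons E₀ l' ih =>
    intro hcl h
    by_cases hE : E₀ ⊆ (P : Set S)
    · exact ⟨E₀, List.mem_cons_self, hE⟩
    rw [Set.not_subset] at hE
    obtain ⟨a₀, ha₀, ha₀n⟩ := hE
    have htail : ∀ as', List.Forall₂ (· ∈ ·) as' l' → as'.prod ∈ P := by
      intro as' h2
      have hpair : ∀ s, a₀ * s * as'.prod ∈ P := by
        intro s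
        have h3 := h ((a₀ * s) :: as')
          (List.Forall₂.cons (hcl E₀ List.mem_cons_self a₀ ha₀ s) h2)
        rwa [List.prod_cons] at h3
      rcases aux_pair hP hpair with h3 | h3
      · exact absurd h3 ha₀n
      · exact h3
    obtain ⟨E, hEl, hEP⟩ := ih (fun E hEmem => hcl E (List.mem_cons_of_mem _ hEmem)) htail
    exact ⟨E, List.mem_cons_of_mem _ hEl, hEP⟩

end Part4

section Part5

open TwoSidedIdeal

variable {A : Type*} [Ring A]

def auxRadIdeal (X : Set A) : TwoSidedIdeal A :=
  TwoSidedIdeal.mk' (primeRad X)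
    (fun Pr _ _ => Pr.zero_mem)
    (fun {a b} ha hb Pr hPr hs => Pr.add_mem (ha Pr hPr hs) (hb Pr hPr hs))
    (fun {a} ha Pr hPr hs => Pr.neg_mem (ha Pr hPr hs))
    (fun {a b} hb Pr hPr hs => Pr.mul_mem_left a b (hb Pr hPr hs))
    (fun {a b} ha Pr hPr hs => Pr.mul_mem_right a b (ha Pr hPr hs))

lemma coe_auxRadIdeal (X : Set A) : ((auxRadIdeal X : TwoSidedIdeal A) : Set A) = primeRad X :=
  TwoSidedIdeal.coe_mk' _ _ _ _ _ _

variable {S : Type*} [Ring S]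

def auxRestrIdeal (R : Subring S) (P : TwoSidedIdeal S) : TwoSidedIdeal R :=
  TwoSidedIdeal.mk' (restrSet R (P : Set S))
    (show ((0 : R) : S) ∈ (P : Set S) by
      rw [ZeroMemClass.coe_zero]; exact P.zero_mem)
    (fun {x y} hx hy => show ((x + y : R) : S) ∈ (P : Set S) by
      push_cast; exact P.add_mem hx hy)
    (fun {x} hx => show ((-x : R) : S) ∈ (P : Set S) by
      push_cast; exact P.neg_mem hx)
    (fun {x y} hy => show ((x * y : R) : S) ∈ (P : Set S) by
      push_cast; exact P.mul_mem_left _ _ hy)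
    (fun {x y} hx => show ((x * y : R) : S) ∈ (P : Set S) by
      push_cast; exact P.mul_mem_right _ _ hx)

lemma mem_auxRestrIdeal {R : Subring S} {P : TwoSidedIdeal S} {z : R} :
    z ∈ auxRestrIdeal R P ↔ (z : S) ∈ P := by
  exact TwoSidedIdeal.mem_mk' _ _ _ _ _ _ z

lemma coe_auxRestrIdeal {R : Subring S} {P : TwoSidedIdeal S} :
    ((auxRestrIdeal R P : TwoSidedIdeal R) : Set R) = restrSet R (P : Set S) :=
  TwoSidedIdeal.coe_mk' _ _ _ _ _ _

lemma aux_exists_minimal {X : Set A} {Q₀ : TwoSidedIdeal A}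
    (hQ₀ : IsPrimeTwoSided Q₀) (hX : X ⊆ (Q₀ : Set A)) :
    ∃ Q : TwoSidedIdeal A, minimalOver X Q ∧ Q ≤ Q₀ := by
  let s : Set ((TwoSidedIdeal A)ᵒᵈ) :=
    {Q | IsPrimeTwoSided (OrderDual.ofDual Q) ∧
      X ⊆ ((OrderDual.ofDual Q : TwoSidedIdeal A) : Set A) ∧ OrderDual.ofDual Q ≤ Q₀}
  have hchain : ∀ c ⊆ s, IsChain (· ≤ ·) c → ∀ y ∈ c, ∃ ub ∈ s, ∀ z ∈ c, z ≤ ub := by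
    intro c hcs hc Qy hQy
    set L : TwoSidedIdeal A := sInf (OrderDual.ofDual '' c) with hLdef
    have hmemL : ∀ x : A, x ∈ L ↔ ∀ Q ∈ c, x ∈ (OrderDual.ofDual Q : TwoSidedIdeal A) := by
      intro x
      rw [hLdef, TwoSidedIdeal.mem_sInf]
      constructor
      · intro h Q hQ; exact h _ ⟨Q, hQ, rfl⟩
      · rintro h I ⟨Q, hQ, rfl⟩; exact h Q hQ
    have hLle : ∀ Q ∈ c, L ≤ (OrderDual.ofDual Q : TwoSidedIdeal A) := by
      intro Q hQ; exact sInf_le ⟨Q, hQ, rfl⟩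
    have hLprime : IsPrimeTwoSided L := by
      constructor
      · intro htop
        have h1 : (1 : A) ∈ L := by rw [htop]; trivial
        have h2 := (hmemL 1).1 h1 Qy hQy
        exact (hcs hQy).1.1 (aux_eq_top_of_one_mem h2)
      · intro I J hIJ
        by_cases hI : I ≤ L
        · exact Or.inl hI
        right
        rw [SetLike.le_def] at hI
        push_neg at hI
        obtain ⟨a, haI, haL⟩ := hI
        rw [hmemL] at haL
        push_neg at haL
        obtain ⟨Q₁, hQ₁c, haQ₁⟩ := haL
        intro b hbJ
        rw [hmemL]
        intro Q hQc
        have hprod : ∀ x ∈ I, ∀ y ∈ J, x * y ∈ (OrderDual.ofDual Q : TwoSidedIdeal A) :=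
          fun x hx y hy2 => hLle Q hQc (hIJ x hx y hy2)
        rcases hc.total hQ₁c hQc with hle | hle
        · -- in dual, Q₁ ≤ Q means ofDual Q ≤ ofDual Q₁ as ideals
          have hQQ₁ : (OrderDual.ofDual Q : TwoSidedIdeal A) ≤ OrderDual.ofDual Q₁ := hle
          rcases (hcs hQc).1.2 I J hprod with h3 | h3
          · exact absurd (hQQ₁ (h3 haI)) haQ₁
          · exact h3 hbJ
        · have hQ₁Q : (OrderDual.ofDual Q₁ : TwoSidedIdeal A) ≤ OrderDual.ofDual Q := hle
          have hprod1 : ∀ x ∈ I, ∀ y ∈ J, x * y ∈ (OrderDual.ofDual Q₁ : TwoSidedIdeal A) :=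
            fun x hx y hy2 => hLle Q₁ hQ₁c (hIJ x hx y hy2)
          rcases (hcs hQ₁c).1.2 I J hprod1 with h3 | h3
          · exact absurd (h3 haI) haQ₁
          · exact hQ₁Q (h3 hbJ)
    refine ⟨OrderDual.toDual L, ⟨hLprime, ?_, ?_⟩, ?_⟩
    · intro x hx
      have hgoal : x ∈ L := by
        rw [hmemL]
        intro Q hQ
        exact (hcs hQ).2.1 hx
      exact hgoal
    · exact le_trans (hLle Qy hQy) (hcs hQy).2.2
    · intro z hz
      exact hLle z hz
  obtain ⟨m, hxm, hm⟩ := zorn_le_nonempty₀ s hchain (OrderDual.toDual Q₀) ⟨hQ₀, hX, le_refl _⟩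
  refine ⟨OrderDual.ofDual m, ⟨hm.1.1, hm.1.2.1, ?_⟩, hm.1.2.2⟩
  intro Q' hQ' hXQ' hle
  have hQ's : OrderDual.toDual Q' ∈ s := ⟨hQ', hXQ', le_trans hle hm.1.2.2⟩
  have h2 := hm.2 hQ's (show m ≤ OrderDual.toDual Q' from hle)
  exact le_antisymm hle h2

end Part5


end AuxProof

/-- Let `R` be a subring of `S`, with the Goldie/nilpotence
hypotheses of (3.7). Then for every prime ideal `P` of `S` there is a prime ideal `Q`
of `R` minimal over `P ∩ R` with `Q^S ⊆ P`. -/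
theorem statement_6 {S : Type*} [Ring S] (R : Subring S)
    (hRG : SemiprimeFactorsGoldie R) (hSG : SemiprimeFactorsGoldie S)
    (hRN : FactorRadsNilpotent R) (hSN : FactorRadsNilpotent S) :
    ∀ P : TwoSidedIdeal S, IsPrimeTwoSided P →
      ∃ Q : TwoSidedIdeal R, minimalOver (restrSet R (P : Set S)) Q ∧
        extSub R (Q : Set R) ⊆ (P : Set S) := by
  classical
  intro P hP
  set Xc : Set R := restrSet R (P : Set S) with hXc
  set XI : TwoSidedIdeal R := auxRestrIdeal R P with hXI
  have hcoeX : (XI : Set R) = Xc := coe_auxRestrIdeal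
  set Nc : Set R := primeRad Xc with hNc
  set NI : TwoSidedIdeal R := auxRadIdeal Xc with hNI
  have hcoeN : (NI : Set R) = Nc := coe_auxRadIdeal Xc
  have hXN : Xc ⊆ Nc := fun x hx Pr hPr hsub => hsub hx
  have hsemi : primeRad (NI : Set R) = (NI : Set R) := by
    rw [hcoeN, hNc]
    ext a
    constructor
    · intro ha Pr hPr hsub
      exact ha Pr hPr (fun z hz => hz Pr hPr hsub)
    · intro ha Pr hPr hsub
      exact ha Pr hPr (fun x hx => hsub (hXN hx))
  have hG := hRG NI hsemi
  have hyq := aux_quot_hy NI (X := Xc) (by rw [hcoeN, hNc])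
  obtain ⟨lB, hlBprime, hlBzero⟩ :
      ∃ l : List (TwoSidedIdeal NI.ringCon.Quotient), (∀ Pr ∈ l, IsPrimeTwoSided Pr) ∧
        ∀ x, (∀ Pr ∈ l, x ∈ Pr) → x = 0 := by
    rcases hG with hL | hRr
    · exact aux_core hyq hL.2
    · obtain ⟨lop, h1, h2⟩ := aux_core (aux_hy_op hyq) hRr.2
      refine ⟨lop.map auxFromOp, ?_, ?_⟩
      · intro Pr hPr
        rw [List.mem_map] at hPr
        obtain ⟨Q, hQ, rfl⟩ := hPr
        exact aux_fromOp_prime (h1 Q hQ)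
      · intro x hx
        have h3 : MulOpposite.op x = 0 := h2 _ (fun Q hQ =>
          mem_auxFromOp.1 (hx (auxFromOp Q) (List.mem_map.2 ⟨Q, hQ, rfl⟩)))
        simpa using h3
  set mkN := RingCon.mk' NI.ringCon with hmkN
  set lR : List (TwoSidedIdeal R) := lB.map (TwoSidedIdeal.comap mkN) with hlR
  have hlRprime : ∀ Q ∈ lR, IsPrimeTwoSided Q := by
    intro Q hQ
    rw [hlR, List.mem_map] at hQ
    obtain ⟨Pr, hPr, rfl⟩ := hQ
    exact aux_comap_prime mkN (aux_mk_surjective _) (hlBprime Pr hPr)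
  have hlRX : ∀ Q ∈ lR, Xc ⊆ (Q : Set R) := by
    intro Q hQ
    rw [hlR, List.mem_map] at hQ
    obtain ⟨Pr, hPr, rfl⟩ := hQ
    intro x hx
    rw [SetLike.mem_coe, TwoSidedIdeal.mem_comap mkN]
    have h0 : mkN x = 0 := (aux_mem_iff_mk_zero NI x).2 (by
      rw [← SetLike.mem_coe, hcoeN]; exact hXN hx)
    rw [h0]
    exact Pr.zero_mem
  have hlRinter : ∀ r : R, (∀ Q ∈ lR, r ∈ Q) → r ∈ Nc := by
    intro r hr
    have h0 : mkN r = 0 := hlBzero _ (fun Pr hPr =>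
      (TwoSidedIdeal.mem_comap mkN).1 (hr _ (by
        rw [hlR]; exact List.mem_map.2 ⟨Pr, hPr, rfl⟩)))
    have h1 : r ∈ NI := (aux_mem_iff_mk_zero NI r).1 h0
    have h2 : r ∈ (NI : Set R) := h1
    rwa [hcoeN] at h2
  obtain ⟨n, hn0, hn⟩ := aux_nilpotent XI (hRN XI)
  have hradX : primeRad ((XI : Set R)) = Nc := by rw [hcoeX, hNc]
  set Qs : List (TwoSidedIdeal R) := (List.replicate n lR).flatten with hQs
  have hLPSP : ∀ r ∈ auxLPS R Qs, (r : S) ∈ P := by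
    intro r hr
    obtain ⟨qs, hqs, rfl⟩ := hr
    have hblocks : ∀ (m : ℕ) (qs' : List R),
        List.Forall₂ (fun q Q => q ∈ Q) qs' ((List.replicate m lR).flatten) →
        ∃ ys : List R, ys.length = m ∧ (∀ y ∈ ys, y ∈ primeRad (XI : Set R)) ∧
          ys.prod = qs'.prod := by
      intro m
      induction m with
      | zero =>
        intro qs' h
        simp only [List.replicate_zero, List.flatten_nil] at h
        rw [List.forall₂_nil_right_iff.1 h]
        exact ⟨[], rfl, by simp, rfl⟩
      | succ m ih =>
        intro qs' h
        obtain ⟨a, b, rfl, h1, h2⟩ := aux_forall₂_append_split lR ((List.replicate m lR).flatten) qs' h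
        obtain ⟨ys, hlen, hysN, hysprod⟩ := ih b h2
        refine ⟨a.prod :: ys, by simp [hlen], ?_, ?_⟩
        · intro y hy
          rcases List.mem_cons.1 hy with rfl | hy'
          · rw [hradX]
            exact hlRinter _ (aux_prod_mem_of_forall₂ lR a h1)
          · exact hysN y hy'
        · rw [List.prod_cons, hysprod, List.prod_append]
    obtain ⟨ys, hlen, hysN, hysprod⟩ := hblocks n qs hqs
    have hprodX : qs.prod ∈ XI := by rw [← hysprod]; exact hn ys hlen hysN
    rw [hXI] at hprodX
    exact mem_auxRestrIdeal.1 hprodX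
  set Es : List (Set S) := Qs.map (fun Q : TwoSidedIdeal R => extSub R (Q : Set R)) with hEs
  have hPPhyp : ∀ as : List S, List.Forall₂ (· ∈ ·) as Es → as.prod ∈ P := by
    intro as h
    rw [hEs, List.forall₂_map_right_iff] at h
    have h1 := aux_chain Qs as h 1
    rw [mul_one] at h1
    exact aux_span_le hLPSP as.prod h1
  have hcl : ∀ E ∈ Es, ∀ a ∈ E, ∀ s, a * s ∈ E := by
    intro E hE a ha s
    rw [hEs, List.mem_map] at hE
    obtain ⟨Q, hQ, rfl⟩ := hE
    exact aux_extSub_mul ha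
  obtain ⟨E, hEmem, hEP⟩ := aux_PP hP Es hcl hPPhyp
  rw [hEs, List.mem_map] at hEmem
  obtain ⟨Q₀, hQ₀mem, rfl⟩ := hEmem
  have hQ₀lR : Q₀ ∈ lR := by
    rw [hQs] at hQ₀mem
    obtain ⟨l', hl', hQl'⟩ := List.mem_flatten.1 hQ₀mem
    rw [List.eq_of_mem_replicate hl'] at hQl'
    exact hQl'
  obtain ⟨Q, hQmin, hQle⟩ := aux_exists_minimal (hlRprime Q₀ hQ₀lR) (hlRX Q₀ hQ₀lR)
  refine ⟨Q, hQmin, ?_⟩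
  intro a ha
  apply hEP
  intro s
  exact Ideal.span_mono (Set.image_mono (fun z hz => hQle hz)) (ha s)
end

section
/- Let R be a subring of a ring S, and assume that every semiprime factor ring of R and of S is left or right Goldie and that the prime radical of every factor ring of R and of S is nilpotent. Then λ is a left adjoint to ρ if and only if for every prime ideal P of S and every prime ideal Q of R, Q^S ⊆ P implies Q ⊆ √(P ∩ R). -/
namespace St7

open TwoSidedIdeal

variable {A : Type*} [Ring A]

lemma eq_top_of_one_mem {P : TwoSidedIdeal A} (h : (1:A) ∈ P) : P = ⊤ :=
  SetLike.ext fun x => ⟨fun _ => trivial, fun _ => by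
    simpa using P.mul_mem_left x 1 h⟩

lemma one_notMem {P : TwoSidedIdeal A} (hP : IsPrimeTwoSided P) : (1:A) ∉ P :=
  fun h => hP.1 (eq_top_of_one_mem h)

lemma span_le {s : Set A} {I : TwoSidedIdeal A} (h : s ⊆ (I : Set A)) :
    TwoSidedIdeal.span s ≤ I :=
  fun _ hx => TwoSidedIdeal.mem_span_iff.mp hx I h

lemma primeRad_of_prime {P : TwoSidedIdeal A} (hP : IsPrimeTwoSided P) :
    primeRad (P : Set A) = (P : Set A) := by
  ext x
  exact ⟨fun h => h P hP subset_rfl, fun hx Q hQ hPQ => hPQ hx⟩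

lemma list_prod_mem_of_exists_mem {l : List A} {T : TwoSidedIdeal A}
    (h : ∃ x ∈ l, x ∈ T) : l.prod ∈ T := by
  induction l with
  | nil => simp at h
  | cons a t ih =>
    obtain ⟨x, hx, hxT⟩ := h
    rw [List.mem_cons] at hx
    rw [List.prod_cons]
    rcases hx with rfl | hx
    · exact T.mul_mem_right _ _ hxT
    · exact T.mul_mem_left _ _ (ih ⟨x, hx, hxT⟩)

lemma exists_le_of_forall_listProd_mem {P : TwoSidedIdeal A} (hP : IsPrimeTwoSided P) :
    ∀ L : List (TwoSidedIdeal A),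
      (∀ l : List A, List.Forall₂ (fun x I => x ∈ I) l L → l.prod ∈ P) →
      ∃ I ∈ L, I ≤ P := by
  intro L
  induction L with
  | nil =>
    intro h
    exact absurd (eq_top_of_one_mem (by simpa using h [] List.Forall₂.nil)) hP.1
  | cons Q L' ih =>
    intro h
    by_cases hQ : Q ≤ P
    · exact ⟨Q, List.mem_cons_self, hQ⟩
    · have hprod : ∀ l : List A, List.Forall₂ (fun x I => x ∈ I) l L' → l.prod ∈ P := by
        set D : TwoSidedIdeal A := TwoSidedIdeal.mk' {x | ∀ a ∈ Q, a * x ∈ P}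
          (fun a _ => by rw [mul_zero]; exact P.zero_mem)
          (fun hx hy a ha => by rw [mul_add]; exact P.add_mem (hx a ha) (hy a ha))
          (fun hx a ha => by rw [mul_neg]; exact P.neg_mem (hx a ha))
          (fun {x y} hy a ha => by
            rw [← mul_assoc]; exact hy _ (Q.mul_mem_right a x ha))
          (fun {x y} hx a ha => by
            rw [← mul_assoc]; exact P.mul_mem_right _ y (hx a ha)) with hD
        have hGD : {x : A | ∃ l : List A, List.Forall₂ (fun x I => x ∈ I) l L' ∧ l.prod = x}
            ⊆ (D : Set A) := by
          rintro x ⟨l, hl, rfl⟩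
          rw [SetLike.mem_coe, hD, TwoSidedIdeal.mem_mk']
          intro a ha
          have := h (a :: l) (List.Forall₂.cons ha hl)
          rwa [List.prod_cons] at this
        have := hP.2 Q (TwoSidedIdeal.span
            {x : A | ∃ l : List A, List.Forall₂ (fun x I => x ∈ I) l L' ∧ l.prod = x})
          (fun a ha b hb => by
            have hbD : b ∈ D := TwoSidedIdeal.mem_span_iff.mp hb D hGD
            rw [hD, TwoSidedIdeal.mem_mk'] at hbD
            exact hbD a ha)
        rcases this with h1 | h2
        · exact absurd h1 hQ
        · intro l hl
          exact h2 (TwoSidedIdeal.subset_span ⟨l, hl, rfl⟩)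
      obtain ⟨I, hI, hIP⟩ := ih hprod
      exact ⟨I, List.mem_cons_of_mem _ hI, hIP⟩

end St7

namespace St7

open TwoSidedIdeal

variable {B : Type*} [Ring B]

def IsSemiprimeRing (B : Type*) [Ring B] : Prop :=
  ∀ x : B, x ∈ primeRad (∅ : Set B) → x = 0

lemma mem_primeRad_empty_of_sandwich {a : B} (h : ∀ s, a * s * a = 0) :
    a ∈ primeRad (∅ : Set B) := by
  intro P hP _
  have hD : (TwoSidedIdeal.span {a} : Set B) ⊆ {y | ∀ s, y * s * a = 0} := by
    have : ({a} : Set B) ⊆ (TwoSidedIdeal.mk' {y | ∀ s, y * s * a = 0}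
        (fun s => by rw [zero_mul, zero_mul])
        (fun hx hy s => by rw [add_mul, add_mul, hx s, hy s, add_zero])
        (fun hx s => by rw [neg_mul, neg_mul, hx s, neg_zero])
        (fun {x y} hy s => by
          have h2 : x * y * s * a = x * (y * s * a) := by noncomm_ring
          rw [h2, hy s, mul_zero])
        (fun {x y} hx s => by
          have h2 : x * y * s * a = x * (y * s) * a := by noncomm_ring
          rw [h2, hx (y * s)]) : Set B) :=
      Set.singleton_subset_iff.mpr (by rw [SetLike.mem_coe, TwoSidedIdeal.mem_mk']; exact h)
    intro y hy
    have := TwoSidedIdeal.mem_span_iff.mp hy _ this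
    rw [TwoSidedIdeal.mem_mk'] at this
    exact this
  have key : ∀ y ∈ TwoSidedIdeal.span {a}, ∀ z ∈ TwoSidedIdeal.span {a}, y * z = 0 := by
    intro y hy z hz
    have hy' : ∀ s, y * s * a = 0 := hD hy
    have : ({a} : Set B) ⊆ (TwoSidedIdeal.mk' {z | ∀ s, y * s * z = 0}
        (fun s => by rw [mul_zero])
        (fun hx hz' s => by rw [mul_add, hx s, hz' s, add_zero])
        (fun hx s => by rw [mul_neg, hx s, neg_zero])
        (fun {x z'} hz' s => by
          have h2 : y * s * (x * z') = y * (s * x) * z' := by noncomm_ring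
          rw [h2, hz' (s * x)])
        (fun {x z'} hx s => by
          have h2 : y * s * (x * z') = y * s * x * z' := by noncomm_ring
          rw [h2, hx s, zero_mul]) : Set B) :=
      Set.singleton_subset_iff.mpr (by rw [SetLike.mem_coe, TwoSidedIdeal.mem_mk']
                                       exact fun s => hy' s)
    have hz' := TwoSidedIdeal.mem_span_iff.mp hz _ this
    rw [TwoSidedIdeal.mem_mk'] at hz'
    have := hz' 1
    rwa [mul_one] at this
  rcases hP.2 (TwoSidedIdeal.span {a}) (TwoSidedIdeal.span {a})
      (fun y hy z hz => (key y hy z hz) ▸ P.zero_mem) with h1 | h1 <;>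
    exact h1 (TwoSidedIdeal.subset_span rfl)

lemma eq_zero_of_sandwich (hB : IsSemiprimeRing B) {a : B}
    (h : ∀ s, a * s * a = 0) : a = 0 :=
  hB a (mem_primeRad_empty_of_sandwich h)

/-- left annihilator of an ideal, as a two-sided ideal. -/
def annI (I : TwoSidedIdeal B) : TwoSidedIdeal B :=
  TwoSidedIdeal.mk' {x | ∀ i ∈ I, x * i = 0}
    (fun i _ => by rw [zero_mul])
    (fun hx hy i hi => by rw [add_mul, hx i hi, hy i hi, add_zero])
    (fun hx i hi => by rw [neg_mul, hx i hi, neg_zero])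
    (fun {x y} hy i hi => by rw [mul_assoc, hy i hi, mul_zero])
    (fun {x y} hx i hi => by rw [mul_assoc]; exact hx _ (I.mul_mem_left y i hi))

lemma mem_annI {I : TwoSidedIdeal B} {x : B} : x ∈ annI I ↔ ∀ i ∈ I, x * i = 0 :=
  TwoSidedIdeal.mem_mk' _ _ _ _ _ _ x

/-- In a semiprime ring, right annihilation implies left annihilation. -/
lemma swap_ann (hB : IsSemiprimeRing B) {I : TwoSidedIdeal B} {x : B}
    (h : ∀ i ∈ I, i * x = 0) : ∀ i ∈ I, x * i = 0 := by
  intro i hi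
  apply eq_zero_of_sandwich hB
  intro s
  have h1 : (i * s) * x = 0 := h _ (I.mul_mem_right i s hi)
  calc x * i * s * (x * i) = x * ((i * s) * x) * i := by noncomm_ring
  _ = 0 := by rw [h1, mul_zero, zero_mul]

lemma swap_ann' (hB : IsSemiprimeRing B) {I : TwoSidedIdeal B} {x : B}
    (h : ∀ i ∈ I, x * i = 0) : ∀ i ∈ I, i * x = 0 := by
  intro i hi
  apply eq_zero_of_sandwich hB
  intro s
  have h1 : x * (s * i) = 0 := h _ (I.mul_mem_left s i hi)
  calc i * x * s * (i * x) = i * (x * (s * i)) * x := by noncomm_ring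
  _ = 0 := by rw [h1, mul_zero, zero_mul]

lemma le_annI_annI (hB : IsSemiprimeRing B) (I : TwoSidedIdeal B) : I ≤ annI (annI I) := by
  intro x hx
  rw [mem_annI]
  exact swap_ann hB (fun y hy => (mem_annI.mp hy) x hx)

lemma annI_anti {I J : TwoSidedIdeal B} (h : I ≤ J) : annI J ≤ annI I := by
  intro x hx
  rw [mem_annI] at hx ⊢
  exact fun i hi => hx i (h hi)

def IsAnn (Aa : TwoSidedIdeal B) : Prop :=
  ∃ T : Set B, ∀ x, x ∈ Aa ↔ ∀ t ∈ T, x * t = 0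

lemma isAnn_annI (I : TwoSidedIdeal B) : IsAnn (annI I) :=
  ⟨(I : Set B), fun x => mem_annI⟩

lemma annI_annI_of_isAnn (hB : IsSemiprimeRing B) {Aa : TwoSidedIdeal B} (hA : IsAnn Aa) :
    annI (annI Aa) = Aa := by
  obtain ⟨T, hT⟩ := hA
  refine le_antisymm ?_ (le_annI_annI hB Aa)
  intro z hz
  rw [mem_annI] at hz
  rw [hT]
  intro t ht
  refine hz t ?_
  rw [mem_annI]
  exact swap_ann hB (fun i hi => ((hT i).mp hi) t ht)

/-- membership in an `IsAnn` ideal is detected by right multiplication against its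
annihilator. -/
lemma mem_isAnn_iff (hB : IsSemiprimeRing B) {Aa : TwoSidedIdeal B} (hA : IsAnn Aa) {x : B} :
    x ∈ Aa ↔ ∀ y ∈ annI Aa, y * x = 0 := by
  constructor
  · intro hx y hy
    rw [mem_annI] at hy
    exact hy x hx
  · intro h
    rw [← annI_annI_of_isAnn hB hA, mem_annI]
    exact swap_ann hB h

lemma no_strict_ann_chain (hB : IsSemiprimeRing B)
    (hacc : ACCLeftAnn B ∨ ACCLeftAnn Bᵐᵒᵖ) :
    ¬ ∃ seq : ℕ → TwoSidedIdeal B, (∀ n, IsAnn (seq n)) ∧ ∀ n, seq n < seq (n + 1) := by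
  rintro ⟨seq, hIsAnn, hlt⟩
  rcases hacc with hacc | hacc
  · obtain ⟨N, hN⟩ := hacc (fun n => (seq n : Set B))
      (fun i => by obtain ⟨T, hT⟩ := hIsAnn i; exact ⟨T, Set.ext fun x => hT x⟩)
      (fun i => (hlt i).le)
    have : seq (N + 1) = seq N := SetLike.coe_injective (hN (N + 1) (Nat.le_succ N))
    exact (hlt N).ne' this
  · obtain ⟨N, hN⟩ := hacc (fun n => {a : Bᵐᵒᵖ | a.unop ∈ seq n})
      (fun i => by
        refine ⟨MulOpposite.op '' (annI (seq i) : Set B), Set.ext fun a => ?_⟩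
        constructor
        · rintro ha t ⟨y, hy, rfl⟩
          rw [← MulOpposite.op_unop a, ← MulOpposite.op_mul, MulOpposite.op_eq_zero_iff]
          rw [SetLike.mem_coe, mem_annI] at hy
          exact hy _ ha
        · intro h
          rw [Set.mem_setOf_eq, mem_isAnn_iff hB (hIsAnn i)]
          intro y hy
          have := h (MulOpposite.op y) ⟨y, hy, rfl⟩
          rwa [← MulOpposite.op_unop a, ← MulOpposite.op_mul, MulOpposite.op_eq_zero_iff] at this)
      (fun i a ha => (hlt i).le ha)
    have : seq (N + 1) = seq N := by
      have h := hN (N + 1) (Nat.le_succ N)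
      refine SetLike.ext fun x => ?_
      have := Set.ext_iff.mp h (MulOpposite.op x)
      simpa using this
    exact (hlt N).ne' this

lemma exists_maximal_isAnn (hB : IsSemiprimeRing B)
    (hacc : ACCLeftAnn B ∨ ACCLeftAnn Bᵐᵒᵖ) {𝒮 : Set (TwoSidedIdeal B)}
    (h𝒮 : ∀ Aa ∈ 𝒮, IsAnn Aa) (hne : 𝒮.Nonempty) :
    ∃ P ∈ 𝒮, ∀ Aa ∈ 𝒮, P ≤ Aa → Aa = P := by
  by_contra hno
  push_neg at hno
  -- hno : ∀ P ∈ 𝒮, ∃ A ∈ 𝒮, P ≤ A ∧ A ≠ P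
  obtain ⟨P₀, hP₀⟩ := hne
  have step : ∀ t : {P // P ∈ 𝒮}, ∃ t' : {P // P ∈ 𝒮}, t.1 < t'.1 := by
    rintro ⟨P, hP⟩
    obtain ⟨Aa, hA, hle, hne'⟩ := hno P hP
    exact ⟨⟨Aa, hA⟩, lt_of_le_of_ne hle (Ne.symm hne')⟩
  choose f hf using step
  refine no_strict_ann_chain hB hacc ⟨fun n => (f^[n] ⟨P₀, hP₀⟩).1, fun n => h𝒮 _ (f^[n] _).2, fun n => ?_⟩
  show (f^[n] ⟨P₀, hP₀⟩ : {P // P ∈ 𝒮}).1 < (f^[n+1] ⟨P₀, hP₀⟩ : {P // P ∈ 𝒮}).1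
  rw [Function.iterate_succ_apply']
  exact hf _

end St7

namespace St7

open TwoSidedIdeal

variable {B : Type*} [Ring B]

lemma prime_of_maximal (hB : IsSemiprimeRing B) {𝒮 : Set (TwoSidedIdeal B)}
    {A₀ : TwoSidedIdeal B}
    (h𝒮 : 𝒮 = {Aa : TwoSidedIdeal B | IsAnn Aa ∧ Aa ≠ ⊤ ∧ A₀ ≤ Aa})
    {P : TwoSidedIdeal B} (hP : P ∈ 𝒮) (hmax : ∀ Aa ∈ 𝒮, P ≤ Aa → Aa = P) :
    IsPrimeTwoSided P := by
  subst h𝒮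
  obtain ⟨hPAnn, hPtop, hPA₀⟩ := hP
  refine ⟨hPtop, fun U V hUV => ?_⟩
  by_cases hU : U ≤ P
  · exact Or.inl hU
  right
  -- A' := left annihilator of the set of products I * U, I = annI P
  set I : TwoSidedIdeal B := annI P with hI
  set A' : TwoSidedIdeal B := TwoSidedIdeal.mk'
      {x | ∀ i ∈ I, ∀ u ∈ U, x * (i * u) = 0}
      (fun i _ u _ => by rw [zero_mul])
      (fun hx hy i hi u hu => by rw [add_mul, hx i hi u hu, hy i hi u hu, add_zero])
      (fun hx i hi u hu => by rw [neg_mul, hx i hi u hu, neg_zero])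
      (fun {x y} hy i hi u hu => by
        have h2 : x * y * (i * u) = x * (y * (i * u)) := by noncomm_ring
        rw [h2, hy i hi u hu, mul_zero])
      (fun {x y} hx i hi u hu => by
        have h2 : x * y * (i * u) = x * ((y * i) * u) := by noncomm_ring
        rw [h2, hx _ (I.mul_mem_left y i hi) u hu]) with hA'
  have memA' : ∀ x, x ∈ A' ↔ ∀ i ∈ I, ∀ u ∈ U, x * (i * u) = 0 := by
    intro x; rw [hA', TwoSidedIdeal.mem_mk']; exact Iff.rfl
  have hIann : IsAnn A' := by
    refine ⟨{t | ∃ i ∈ I, ∃ u ∈ U, i * u = t}, fun x => ?_⟩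
    rw [memA']
    constructor
    · rintro h t ⟨i, hi, u, hu, rfl⟩; exact h i hi u hu
    · intro h i hi u hu; exact h _ ⟨i, hi, u, hu, rfl⟩
  have hPleA' : P ≤ A' := by
    intro p hp
    rw [memA']
    intro i hi u hu
    have hpi : p * i = 0 := (mem_annI.mp (le_annI_annI hB P hp)) i hi
    have h2 : p * (i * u) = (p * i) * u := by noncomm_ring
    rw [h2, hpi, zero_mul]
  have hA'top : A' ≠ ⊤ := by
    intro htop
    apply hU
    intro u hu
    have h1 : (1 : B) ∈ A' := htop ▸ trivial
    rw [memA'] at h1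
    have : ∀ i ∈ I, i * u = 0 := fun i hi => by
      have := h1 i hi u hu; rwa [one_mul] at this
    have hu' : u ∈ annI I := mem_annI.mpr (swap_ann hB this)
    rwa [hI, annI_annI_of_isAnn hB hPAnn] at hu'
  have hA'eq : A' = P := hmax A' ⟨hIann, hA'top, le_trans hPA₀ hPleA'⟩ hPleA'
  intro v hv
  rw [← hA'eq, memA']
  intro i hi u hu
  apply eq_zero_of_sandwich hB
  intro s
  have husv : (u * s) * v ∈ P := hUV _ (U.mul_mem_right u s hu) v hv
  have hi0 : i * ((u * s) * v) = 0 := (mem_annI.mp hi) _ husv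
  calc v * (i * u) * s * (v * (i * u)) = v * (i * ((u * s) * v)) * (i * u) := by noncomm_ring
  _ = 0 := by rw [hi0, mul_zero, zero_mul]

lemma exists_prime_avoiding (hB : IsSemiprimeRing B)
    (hacc : ACCLeftAnn B ∨ ACCLeftAnn Bᵐᵒᵖ) {x : B} (hx : x ≠ 0) :
    ∃ P : TwoSidedIdeal B, IsPrimeTwoSided P ∧ IsAnn P ∧ x ∉ P := by
  set X : TwoSidedIdeal B := TwoSidedIdeal.span {x} with hX
  set A₀ : TwoSidedIdeal B := annI X with hA₀
  have hA₀top : A₀ ≠ ⊤ := by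
    intro htop
    apply hx
    have h1 : (1 : B) ∈ A₀ := htop ▸ trivial
    have := (mem_annI.mp h1) x (TwoSidedIdeal.subset_span rfl)
    rwa [one_mul] at this
  set 𝒮 : Set (TwoSidedIdeal B) := {Aa | IsAnn Aa ∧ Aa ≠ ⊤ ∧ A₀ ≤ Aa} with h𝒮
  obtain ⟨P, hP𝒮, hmax⟩ := exists_maximal_isAnn hB hacc (𝒮 := 𝒮)
    (fun Aa hAa => hAa.1) ⟨A₀, isAnn_annI X, hA₀top, le_refl A₀⟩
  refine ⟨P, prime_of_maximal hB h𝒮 hP𝒮 hmax, hP𝒮.1, ?_⟩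
  intro hxP
  obtain ⟨hPAnn, hPtop, hPA₀⟩ := hP𝒮
  have hXP : X ≤ P := span_le (Set.singleton_subset_iff.mpr hxP)
  -- annI P ≤ A₀ ≤ P
  have hIP : annI P ≤ P := by
    refine le_trans ?_ hPA₀
    intro i hi
    rw [hA₀, mem_annI]
    exact fun ξ hξ => (mem_annI.mp hi) ξ (hXP hξ)
  -- every element of annI P is zero
  have hI0 : ∀ i ∈ annI P, i = 0 := by
    intro i hi
    apply eq_zero_of_sandwich hB
    intro s
    exact (mem_annI.mp ((annI P).mul_mem_right i s hi)) i (hIP hi)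
  have : annI (annI P) = ⊤ := by
    apply eq_top_of_one_mem
    rw [mem_annI]
    intro i hi
    rw [hI0 i hi, mul_zero]
  rw [annI_annI_of_isAnn hB hPAnn] at this
  exact hPtop this

theorem finite_prime_decomp (hB : IsSemiprimeRing B)
    (hacc : ACCLeftAnn B ∨ ACCLeftAnn Bᵐᵒᵖ) :
    ∃ L : List (TwoSidedIdeal B), (∀ P ∈ L, IsPrimeTwoSided P) ∧
      (∀ x : B, (∀ P ∈ L, x ∈ P) → x = 0) := by
  by_contra hno
  push_neg at hno
  -- hno : ∀ L, (∀ P ∈ L, prime) → ∃ x, (∀ P ∈ L, x ∈ P) ∧ x ≠ 0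
  have step : ∀ t : {L : List (TwoSidedIdeal B) // ∀ P ∈ L, IsPrimeTwoSided P ∧ IsAnn P},
      ∃ t' : {L : List (TwoSidedIdeal B) // ∀ P ∈ L, IsPrimeTwoSided P ∧ IsAnn P},
        ∃ P₀ x, t'.1 = P₀ :: t.1 ∧ IsAnn P₀ ∧ (∀ Q ∈ t.1, x ∈ Q) ∧ x ≠ 0 ∧ x ∉ P₀ := by
    rintro ⟨L, hL⟩
    obtain ⟨x, hxL, hx0⟩ := hno L (fun P hP => (hL P hP).1)
    obtain ⟨P₀, hP₀prime, hP₀ann, hxP₀⟩ := exists_prime_avoiding hB hacc hx0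
    exact ⟨⟨P₀ :: L, by
      intro P hP
      rcases List.mem_cons.mp hP with rfl | hP
      · exact ⟨hP₀prime, hP₀ann⟩
      · exact hL P hP⟩, P₀, x, rfl, hP₀ann, hxL, hx0, hxP₀⟩
  choose f hf using step
  set t₀ : {L : List (TwoSidedIdeal B) // ∀ P ∈ L, IsPrimeTwoSided P ∧ IsAnn P} :=
    ⟨[], by simp⟩ with ht₀
  set D : ℕ → TwoSidedIdeal B := fun n => sInf {P | P ∈ (f^[n] t₀).1} with hD
  have memD : ∀ n x, x ∈ D n ↔ ∀ P ∈ (f^[n] t₀).1, x ∈ P := by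
    intro n x
    rw [hD, TwoSidedIdeal.mem_sInf]
    exact ⟨fun h P hP => h P hP, fun h P hP => h P hP⟩
  refine no_strict_ann_chain hB hacc ⟨fun n => annI (D n), fun n => isAnn_annI _, fun n => ?_⟩
  show annI (D n) < annI (D (n+1))
  obtain ⟨P₀, x, hcons, hP₀ann, hxL, hx0, hxP₀⟩ := hf (f^[n] t₀)
  have hsucc : (f^[n+1] t₀).1 = P₀ :: (f^[n] t₀).1 := by
    rw [Function.iterate_succ_apply']; exact hcons
  have hle : annI (D n) ≤ annI (D (n+1)) := by
    apply annI_anti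
    intro y hy
    rw [memD] at hy ⊢
    intro P hP
    exact hy P (by rw [hsucc]; exact List.mem_cons_of_mem _ hP)
  refine lt_of_le_of_ne hle ?_
  intro heq
  -- annI P₀ ≤ annI (D (n+1)) = annI (D n), so x ∈ P₀, contradiction
  have h1 : annI P₀ ≤ annI (D (n+1)) := by
    intro i hi
    rw [mem_annI]
    intro d hd
    rw [memD] at hd
    exact (mem_annI.mp hi) d (hd P₀ (by rw [hsucc]; exact List.mem_cons_self))
  rw [← heq] at h1
  have hxD : x ∈ D n := (memD n x).mpr hxL
  have h2 : ∀ i ∈ annI P₀, i * x = 0 := fun i hi => (mem_annI.mp (h1 hi)) x hxD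
  have h3 : x ∈ annI (annI P₀) := mem_annI.mpr (swap_ann hB h2)
  rw [annI_annI_of_isAnn hB hP₀ann] at h3
  exact hxP₀ h3

end St7

namespace St7

open TwoSidedIdeal

variable {A : Type*} [Ring A] (K : TwoSidedIdeal A)

lemma mk_surjective : Function.Surjective K.ringCon.mk' :=
  fun q => Quot.inductionOn q fun a => ⟨a, rfl⟩

lemma mk_eq_iff (a b : A) : K.ringCon.mk' a = K.ringCon.mk' b ↔ a - b ∈ K := by
  show (a : K.ringCon.Quotient) = b ↔ _
  rw [RingCon.eq, TwoSidedIdeal.rel_iff]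

lemma mk_zero_iff (a : A) : K.ringCon.mk' a = 0 ↔ a ∈ K := by
  rw [show (0 : K.ringCon.Quotient) = K.ringCon.mk' 0 from (map_zero _).symm,
    mk_eq_iff, sub_zero]

/-- image of a two-sided ideal under the quotient map. -/
def pushI (P : TwoSidedIdeal A) : TwoSidedIdeal K.ringCon.Quotient :=
  TwoSidedIdeal.mk' (K.ringCon.mk' '' (P : Set A))
    ⟨0, P.zero_mem, map_zero _⟩
    (fun {x y} hx hy => by
      obtain ⟨p, hp, rfl⟩ := hx; obtain ⟨q, hq, rfl⟩ := hy
      exact ⟨p + q, P.add_mem hp hq, map_add _ _ _⟩)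
    (fun {x} hx => by
      obtain ⟨p, hp, rfl⟩ := hx
      exact ⟨-p, P.neg_mem hp, map_neg _ _⟩)
    (fun {x y} hy => by
      obtain ⟨p, hp, rfl⟩ := hy
      obtain ⟨s, rfl⟩ := mk_surjective K x
      exact ⟨s * p, P.mul_mem_left s p hp, map_mul _ _ _⟩)
    (fun {x y} hx => by
      obtain ⟨p, hp, rfl⟩ := hx
      obtain ⟨s, rfl⟩ := mk_surjective K y
      exact ⟨p * s, P.mul_mem_right p s hp, map_mul _ _ _⟩)

lemma mem_pushI {P : TwoSidedIdeal A} {y : K.ringCon.Quotient} :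
    y ∈ pushI K P ↔ ∃ p ∈ P, K.ringCon.mk' p = y := by
  exact (TwoSidedIdeal.mem_mk' _ _ _ _ _ _ y).trans
    ⟨fun ⟨p, hp, h⟩ => ⟨p, hp, h⟩, fun ⟨p, hp, h⟩ => ⟨p, hp, h⟩⟩

lemma comap_prime {P' : TwoSidedIdeal K.ringCon.Quotient} (hP' : IsPrimeTwoSided P') :
    IsPrimeTwoSided (P'.comap K.ringCon.mk') ∧ K ≤ P'.comap K.ringCon.mk' := by
  constructor
  · constructor
    · intro htop
      apply hP'.1
      apply eq_top_of_one_mem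
      have : (1 : A) ∈ P'.comap K.ringCon.mk' := htop ▸ trivial
      rw [TwoSidedIdeal.mem_comap, map_one] at this
      exact this
    · intro I J hIJ
      rcases hP'.2 (pushI K I) (pushI K J) (fun a ha b hb => by
        obtain ⟨p, hp, rfl⟩ := (mem_pushI K).mp ha
        obtain ⟨q, hq, rfl⟩ := (mem_pushI K).mp hb
        rw [← map_mul]
        have := hIJ p hp q hq
        rwa [TwoSidedIdeal.mem_comap] at this) with h | h
      · exact Or.inl (fun a ha => by
          rw [TwoSidedIdeal.mem_comap]
          exact h ((mem_pushI K).mpr ⟨a, ha, rfl⟩))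
      · exact Or.inr (fun a ha => by
          rw [TwoSidedIdeal.mem_comap]
          exact h ((mem_pushI K).mpr ⟨a, ha, rfl⟩))
  · intro k hk
    rw [TwoSidedIdeal.mem_comap, (mk_zero_iff K k).mpr hk]
    exact P'.zero_mem

lemma comap_pushI_of_le {P : TwoSidedIdeal A} (hKP : K ≤ P) :
    (pushI K P).comap K.ringCon.mk' = P := by
  refine SetLike.ext fun x => ?_
  rw [TwoSidedIdeal.mem_comap, mem_pushI]
  constructor
  · rintro ⟨p, hp, hpx⟩
    have : p - x ∈ K := (mk_eq_iff K p x).mp hpx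
    have := P.sub_mem hp (hKP this)
    simpa using this
  · intro hx
    exact ⟨x, hx, rfl⟩

lemma pushI_prime {P : TwoSidedIdeal A} (hP : IsPrimeTwoSided P) (hKP : K ≤ P) :
    IsPrimeTwoSided (pushI K P) := by
  constructor
  · intro htop
    apply one_notMem hP
    have : (1 : K.ringCon.Quotient) ∈ pushI K P := htop ▸ trivial
    rw [← map_one K.ringCon.mk', ← TwoSidedIdeal.mem_comap, comap_pushI_of_le K hKP] at this
    exact this
  · intro U V hUV
    rcases hP.2 (U.comap K.ringCon.mk') (V.comap K.ringCon.mk') (fun a ha b hb => by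
      rw [TwoSidedIdeal.mem_comap] at ha hb
      have := hUV _ ha _ hb
      rw [← map_mul, ← TwoSidedIdeal.mem_comap, comap_pushI_of_le K hKP] at this
      exact this) with h | h
    · refine Or.inl (fun u hu => ?_)
      obtain ⟨a, rfl⟩ := mk_surjective K u
      have : a ∈ U.comap K.ringCon.mk' := (TwoSidedIdeal.mem_comap _).mpr hu
      exact (mem_pushI K).mpr ⟨a, h this, rfl⟩
    · refine Or.inr (fun u hu => ?_)
      obtain ⟨a, rfl⟩ := mk_surjective K u
      have : a ∈ V.comap K.ringCon.mk' := (TwoSidedIdeal.mem_comap _).mpr hu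
      exact (mem_pushI K).mpr ⟨a, h this, rfl⟩

lemma primeRad_quot_iff {x : A} :
    x ∈ primeRad (K : Set A) ↔
      K.ringCon.mk' x ∈ primeRad (∅ : Set K.ringCon.Quotient) := by
  constructor
  · intro h P' hP' _
    obtain ⟨h1, h2⟩ := comap_prime K hP'
    have := h _ h1 (fun k hk => h2 hk)
    rwa [TwoSidedIdeal.mem_comap] at this
  · intro h P hP hKP
    have hKP' : K ≤ P := fun k hk => hKP hk
    have := h (pushI K P) (pushI_prime K hP hKP') (Set.empty_subset _)
    rw [← TwoSidedIdeal.mem_comap, comap_pushI_of_le K hKP'] at this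
    exact this

lemma quotient_semiprime (hK : primeRad (K : Set A) = (K : Set A)) :
    IsSemiprimeRing K.ringCon.Quotient := by
  intro q hq
  obtain ⟨x, rfl⟩ := mk_surjective K q
  rw [← primeRad_quot_iff] at hq
  rw [mk_zero_iff]
  rw [hK] at hq
  exact hq

theorem semiprime_decomp (hK : primeRad (K : Set A) = (K : Set A))
    (hG : SemiprimeFactorsGoldie A) :
    ∃ L : List (TwoSidedIdeal A), (∀ P ∈ L, IsPrimeTwoSided P ∧ K ≤ P) ∧
      ∀ x : A, (∀ P ∈ L, x ∈ P) → x ∈ K := by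
  have hacc : ACCLeftAnn K.ringCon.Quotient ∨ ACCLeftAnn (K.ringCon.Quotient)ᵐᵒᵖ := by
    rcases hG K hK with h | h
    · exact Or.inl h.2
    · exact Or.inr h.2
  obtain ⟨L', hL'prime, hL'inf⟩ := finite_prime_decomp (quotient_semiprime K hK) hacc
  refine ⟨L'.map (fun P' => P'.comap K.ringCon.mk'), ?_, ?_⟩
  · intro P hP
    obtain ⟨P', hP', rfl⟩ := List.mem_map.mp hP
    exact comap_prime K (hL'prime P' hP')
  · intro x hx
    rw [← mk_zero_iff K x]
    apply hL'inf
    intro P' hP'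
    have := hx _ (List.mem_map.mpr ⟨P', hP', rfl⟩)
    rwa [TwoSidedIdeal.mem_comap] at this

theorem rad_nilpotent (hN : FactorRadsNilpotent A) :
    ∃ n : ℕ, 0 < n ∧ ∀ l : List A, l.length = n →
      (∀ x ∈ l, x ∈ primeRad (K : Set A)) → l.prod ∈ K := by
  obtain ⟨n, hn, hnil⟩ := hN K
  refine ⟨n, hn, fun l hl hmem => ?_⟩
  rw [← mk_zero_iff K, map_list_prod]
  apply hnil
  · rw [List.length_map, hl]
  · intro y hy
    obtain ⟨x, hx, rfl⟩ := List.mem_map.mp hy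
    exact (primeRad_quot_iff K).mp (hmem x hx)

end St7

namespace St7

open TwoSidedIdeal

variable {S : Type*} [Ring S] {R : Subring S}

/-- `extSub` as a two-sided ideal of `S`. -/
def extSubI (R : Subring S) (X : Set R) : TwoSidedIdeal S :=
  TwoSidedIdeal.mk' (extSub R X)
    (fun s => by rw [zero_mul]; exact Ideal.zero_mem _)
    (fun {x y} hx hy s => by rw [add_mul]; exact Ideal.add_mem _ (hx s) (hy s))
    (fun {x} hx s => by rw [neg_mul]; exact Submodule.neg_mem _ (hx s))
    (fun {x y} hy s => by rw [mul_assoc]; exact Ideal.mul_mem_left _ x (hy s))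
    (fun {x y} hx s => by rw [mul_assoc]; exact hx (y * s))

lemma mem_extSubI {X : Set R} {a : S} : a ∈ extSubI R X ↔ a ∈ extSub R X :=
  TwoSidedIdeal.mem_mk' _ _ _ _ _ _ a

lemma mul_val_mem_span {X T : Set R} {z : S} (hz : z ∈ Ideal.span (Subtype.val '' X))
    {t : R} (ht : t ∈ T) :
    z * (t : S) ∈ Ideal.span (Subtype.val '' {r : R | ∃ q ∈ X, ∃ t' ∈ T, q * t' = r}) := by
  obtain ⟨n, f, g, rfl⟩ := Submodule.mem_span_set'.mp hz
  rw [Finset.sum_mul]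
  refine Submodule.sum_mem _ (fun i _ => ?_)
  obtain ⟨q, hq, hval⟩ := (g i).2
  rw [smul_mul_assoc]
  refine Submodule.smul_mem _ _ (Ideal.subset_span ?_)
  refine ⟨q * t, ⟨q, hq, t, ht, rfl⟩, ?_⟩
  push_cast
  rw [hval]

lemma extSub_mul_span {X T : Set R} {a y : S} (ha : a ∈ extSub R X)
    (hy : y ∈ Ideal.span (Subtype.val '' T)) :
    a * y ∈ Ideal.span (Subtype.val '' {r : R | ∃ q ∈ X, ∃ t ∈ T, q * t = r}) := by
  obtain ⟨n, f, g, rfl⟩ := Submodule.mem_span_set'.mp hy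
  rw [Finset.mul_sum]
  refine Submodule.sum_mem _ (fun i _ => ?_)
  obtain ⟨t, ht, hval⟩ := (g i).2
  have h2 : a * (f i • (g i : S)) = (a * f i) * (g i : S) := by
    rw [smul_eq_mul]; noncomm_ring
  rw [h2, ← hval]
  exact mul_val_mem_span (ha (f i)) ht

lemma prod_extSub_inter {L : List (TwoSidedIdeal R)} {l : List S}
    (h : List.Forall₂ (fun a (Q : TwoSidedIdeal R) => a ∈ extSub R (Q : Set R)) l L) (s : S) :
    l.prod * s ∈ Ideal.span (Subtype.val '' {r : R | ∀ Q ∈ L, r ∈ Q}) := by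
  induction L generalizing l s with
  | nil =>
    cases h
    rw [List.prod_nil, one_mul]
    have h1 : ((1 : R) : S) ∈ Subtype.val ''
        {r : R | ∀ Q ∈ ([] : List (TwoSidedIdeal R)), r ∈ Q} := ⟨1, by simp, rfl⟩
    simpa using Ideal.mul_mem_left _ s (Ideal.subset_span h1)
  | cons Q L' ih =>
    obtain ⟨a, l', ha, h', rfl⟩ : ∃ a l', a ∈ extSub R (Q : Set R) ∧
        List.Forall₂ (fun a (Q : TwoSidedIdeal R) => a ∈ extSub R (Q : Set R)) l' L' ∧
          l = a :: l' := by
      cases h with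
      | cons ha h' => exact ⟨_, _, ha, h', rfl⟩
    rw [List.prod_cons, mul_assoc]
    refine Ideal.span_mono (Set.image_mono ?_) (extSub_mul_span ha (ih h' s))
    rintro r ⟨q, hq, t, ht, rfl⟩
    intro Q'' hQ''
    rcases List.mem_cons.mp hQ'' with rfl | hQ''
    · exact Q''.mul_mem_right q t hq
    · exact Q''.mul_mem_left q t (ht Q'' hQ'')

lemma prod_extSub_pow {X : Set R} {l : List S} (h : ∀ a ∈ l, a ∈ extSub R X) (s : S) :
    l.prod * s ∈ Ideal.span (Subtype.val ''
      {r : R | ∃ m : List R, m.length = l.length ∧ (∀ x ∈ m, x ∈ X) ∧ m.prod = r}) := by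
  induction l generalizing s with
  | nil =>
    rw [List.prod_nil, one_mul]
    have h1 : ((1 : R) : S) ∈ Subtype.val ''
        {r : R | ∃ m : List R, m.length = ([] : List S).length ∧ (∀ x ∈ m, x ∈ X) ∧ m.prod = r} :=
      ⟨1, ⟨[], rfl, by simp, rfl⟩, rfl⟩
    simpa using Ideal.mul_mem_left _ s (Ideal.subset_span h1)
  | cons a l' ih =>
    rw [List.prod_cons, mul_assoc]
    refine Ideal.span_mono (Set.image_mono ?_)
      (extSub_mul_span (h a (List.mem_cons_self))
        (ih (fun b hb => h b (List.mem_cons_of_mem _ hb)) s))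
    rintro r ⟨q, hq, t, ⟨m, hm, hmX, rfl⟩, rfl⟩
    refine ⟨q :: m, by simp [hm], ?_, by rw [List.prod_cons]⟩
    intro x hx
    rcases List.mem_cons.mp hx with rfl | hx
    · exact hq
    · exact hmX x hx

lemma span_val_le {X : Set R} {J : TwoSidedIdeal S} (h : Subtype.val '' X ⊆ (J : Set S)) :
    ∀ y ∈ Ideal.span (Subtype.val '' X), y ∈ J := by
  intro y hy
  have h2 : Ideal.span (Subtype.val '' X) ≤ TwoSidedIdeal.asIdeal J :=
    Ideal.span_le.mpr (by rwa [TwoSidedIdeal.coe_asIdeal])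
  exact (TwoSidedIdeal.mem_asIdeal).mp (h2 hy)

end St7

namespace St7

open TwoSidedIdeal

variable {S : Type*} [Ring S] {R : Subring S}

def restrI (R : Subring S) (J : TwoSidedIdeal S) : TwoSidedIdeal R :=
  TwoSidedIdeal.comap R.subtype J

lemma mem_restrI {J : TwoSidedIdeal S} {x : R} : x ∈ restrI R J ↔ (x : S) ∈ J := by
  rw [restrI, TwoSidedIdeal.mem_comap, Subring.coe_subtype]

lemma restrI_coe (J : TwoSidedIdeal S) :
    ((restrI R J : TwoSidedIdeal R) : Set R) = restrSet R (J : Set S) := by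
  ext x
  rw [SetLike.mem_coe, mem_restrI]
  exact Iff.rfl

lemma zarV_subset_iff {A : Type*} [Ring A] {X Y : Set A} :
    zarV X ⊆ zarV Y ↔
      ∀ P : TwoSidedIdeal A, IsPrimeTwoSided P → X ⊆ (P : Set A) → Y ⊆ (P : Set A) := by
  constructor
  · intro h P hP hX; exact (h ⟨hP, hX⟩).2
  · intro h P hP; exact ⟨hP.1, h P hP.1 hP.2⟩

lemma forall₂_replicate {α β : Type*} {r : α → β → Prop} {l : List α} {b : β} {n : ℕ}
    (h : List.Forall₂ r l (List.replicate n b)) : ∀ a ∈ l, r a b := by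
  induction n generalizing l with
  | zero => cases h; intro a ha; simp at ha
  | succ n ih =>
    rw [List.replicate_succ] at h
    cases h with
    | cons ha h' =>
      intro a' ha'
      rcases List.mem_cons.mp ha' with rfl | ha'
      · assumption
      · exact ih h' a' ha'

lemma forall₂_val_prod_mem {LS : List (TwoSidedIdeal S)} {l : List R}
    (h : List.Forall₂ (fun (x : R) P => (x : S) ∈ P) l LS) :
    ∀ P ∈ LS, (l.map (Subtype.val : R → S)).prod ∈ P := by
  induction LS generalizing l with
  | nil => intro P hP; simp at hP
  | cons P0 LS' ih =>
    obtain ⟨a, l', ha, h', rfl⟩ : ∃ a l', ((a : R) : S) ∈ P0 ∧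
        List.Forall₂ (fun (x : R) P => (x : S) ∈ P) l' LS' ∧ l = a :: l' := by
      cases h with
      | cons ha h' => exact ⟨_, _, ha, h', rfl⟩
    intro P'' hP''
    rw [List.map_cons, List.prod_cons]
    rcases List.mem_cons.mp hP'' with rfl | hP''
    · exact P''.mul_mem_right _ _ ha
    · exact P''.mul_mem_left _ _ (ih h' P'' hP'')

lemma adj_forward (R : Subring S) (hRN : FactorRadsNilpotent R)
    (J : TwoSidedIdeal S) (I : TwoSidedIdeal R)
    (hA : zarV (restrSet R (J : Set S)) ⊆ zarV (I : Set R)) :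
    zarV (J : Set S) ⊆ zarV (extSub R (I : Set R)) := by
  rw [zarV_subset_iff] at hA ⊢
  intro P hP hJP
  obtain ⟨n, hn, hnil⟩ := rad_nilpotent (restrI R J) hRN
  have hIrad : (I : Set R) ⊆ primeRad ((restrI R J : TwoSidedIdeal R) : Set R) := by
    intro x hx Q' hQ' hsub
    rw [restrI_coe] at hsub
    exact hA Q' hQ' hsub hx
  have hprod : ∀ l : List S,
      List.Forall₂ (fun x E => x ∈ E) l (List.replicate n (extSubI R (I : Set R))) →
      l.prod ∈ P := by
    intro l hl
    have hlen : l.length = n := by simpa using hl.length_eq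
    have hmem : ∀ b ∈ l, b ∈ extSub R (I : Set R) := fun b hb =>
      mem_extSubI.mp (forall₂_replicate hl b hb)
    have h1 := prod_extSub_pow hmem 1
    rw [mul_one] at h1
    have h2 : Subtype.val '' {r : R | ∃ m : List R, m.length = l.length ∧
        (∀ x ∈ m, x ∈ (I : Set R)) ∧ m.prod = r} ⊆ (J : Set S) := by
      rintro _ ⟨r, ⟨m, hm, hmI, rfl⟩, rfl⟩
      have hmK : m.prod ∈ restrI R J :=
        hnil m (by rw [hm, hlen]) (fun x hx => hIrad (hmI x hx))
      exact mem_restrI.mp hmK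
    exact hJP (span_val_le h2 _ h1)
  obtain ⟨E, hEmem, hEle⟩ := exists_le_of_forall_listProd_mem hP _ hprod
  have hE : E = extSubI R (I : Set R) := List.eq_of_mem_replicate hEmem
  intro a ha
  exact hEle (hE ▸ mem_extSubI.mpr ha)

lemma adj_backward (R : Subring S) (hRG : SemiprimeFactorsGoldie R)
    (hSG : SemiprimeFactorsGoldie S)
    (hC : ∀ P : TwoSidedIdeal S, IsPrimeTwoSided P →
        ∀ Q : TwoSidedIdeal R, IsPrimeTwoSided Q →
          extSub R (Q : Set R) ⊆ (P : Set S) →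
            (Q : Set R) ⊆ primeRad (restrSet R (P : Set S)))
    (J : TwoSidedIdeal S) (hJ : primeRad (J : Set S) = (J : Set S))
    (I : TwoSidedIdeal R) (hI : primeRad (I : Set R) = (I : Set R))
    (hB : zarV (J : Set S) ⊆ zarV (extSub R (I : Set R))) :
    zarV (restrSet R (J : Set S)) ⊆ zarV (I : Set R) := by
  rw [zarV_subset_iff] at hB ⊢
  intro Q' hQ' hJQ'
  obtain ⟨LS, hLSpr, hLSinf⟩ := semiprime_decomp J hJ hSG
  obtain ⟨LR, hLRpr, hLRinf⟩ := semiprime_decomp I hI hRG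
  have hprod1 : ∀ l : List R,
      List.Forall₂ (fun x Pr => x ∈ Pr) l (LS.map (restrI R)) → l.prod ∈ Q' := by
    intro l hl
    rw [List.forall₂_map_right_iff] at hl
    have hl' : List.Forall₂ (fun (x : R) P => (x : S) ∈ P) l LS :=
      hl.imp (fun _ _ hmem => mem_restrI.mp hmem)
    have hall := forall₂_val_prod_mem hl'
    have hJmem : ((l.map (Subtype.val : R → S)).prod) ∈ J := hLSinf _ hall
    have hv : ((l.prod : R) : S) = (l.map (Subtype.val : R → S)).prod := by
      rw [← Subring.coe_subtype]
      exact map_list_prod R.subtype l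
    apply hJQ'
    show l.prod ∈ restrSet R (J : Set S)
    show ((l.prod : R) : S) ∈ (J : Set S)
    rw [hv]
    exact hJmem
  obtain ⟨Pr, hPrmem, hPrle⟩ := exists_le_of_forall_listProd_mem hQ' _ hprod1
  obtain ⟨P, hPmem, rfl⟩ := List.mem_map.mp hPrmem
  obtain ⟨hPprime, hJP⟩ := hLSpr P hPmem
  have hEP : extSub R (I : Set R) ⊆ (P : Set S) :=
    hB P hPprime (fun y hy => hJP hy)
  have hprod2 : ∀ l : List S,
      List.Forall₂ (fun x E => x ∈ E) l (LR.map (fun Q : TwoSidedIdeal R => extSubI R (Q : Set R))) →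
      l.prod ∈ P := by
    intro l hl
    have hl2 := (List.forall₂_map_right_iff
      (f := fun Q : TwoSidedIdeal R => extSubI R (Q : Set R))).mp hl
    have hl' : List.Forall₂ (fun a Q => a ∈ extSub R ((Q : TwoSidedIdeal R) : Set R)) l LR :=
      hl2.imp (fun _ _ hmem => mem_extSubI.mp hmem)
    have hE : l.prod ∈ extSub R (I : Set R) := by
      intro s
      refine Ideal.span_mono (Set.image_mono ?_) (prod_extSub_inter hl' s)
      intro r hr
      exact hLRinf r (fun Q hQ => hr Q hQ)
    exact hEP hE
  obtain ⟨E, hEmem, hEle⟩ := exists_le_of_forall_listProd_mem hPprime _ hprod2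
  obtain ⟨Q, hQmem, rfl⟩ := List.mem_map.mp hEmem
  obtain ⟨hQprime, hIQ⟩ := hLRpr Q hQmem
  have hQrad := hC P hPprime Q hQprime (fun a ha => hEle (mem_extSubI.mpr ha))
  intro x hx
  have hxQ : x ∈ Q := hIQ hx
  refine hQrad hxQ Q' hQ' ?_
  intro y hy
  exact hPrle (mem_restrI.mpr hy)

end St7

/-- Let `R` be a subring of `S`, with the Goldie/nilpotence
hypotheses of (3.7). Then `λ` is a left adjoint to `ρ` if and only if for every prime
`P` of `S` and every prime `Q` of `R`, `Q^S ⊆ P` implies `Q ⊆ √(P ∩ R)`. -/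
theorem statement_7 {S : Type*} [Ring S] (R : Subring S)
    (hRG : SemiprimeFactorsGoldie R) (hSG : SemiprimeFactorsGoldie S)
    (hRN : FactorRadsNilpotent R) (hSN : FactorRadsNilpotent S) :
    AdjSub R ↔
      ∀ P : TwoSidedIdeal S, IsPrimeTwoSided P →
        ∀ Q : TwoSidedIdeal R, IsPrimeTwoSided Q →
          extSub R (Q : Set R) ⊆ (P : Set S) →
            (Q : Set R) ⊆ primeRad (restrSet R (P : Set S)) := by
  constructor
  · intro hAdj P hP Q hQ hQP
    have h1 : zarV ((P : Set S)) ⊆ zarV (extSub R (Q : Set R)) := by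
      rw [St7.zarV_subset_iff]
      intro P' hP' hPP'
      exact fun a ha => hPP' (hQP ha)
    have h2 := (hAdj P (St7.primeRad_of_prime hP) Q (St7.primeRad_of_prime hQ)).mpr h1
    rw [St7.zarV_subset_iff] at h2
    intro x hx Q'' hQ'' hsub
    exact h2 Q'' hQ'' hsub hx
  · intro hC J hJ I hI
    constructor
    · exact St7.adj_forward R hRN J I
    · exact St7.adj_backward R hRG hSG hC J hJ I hI
end

section
/- Let R be a subring of a ring S, and assume that every semiprime factor ring of R and of S is left or right Goldie and that the prime radical of every factor ring of R and of S is nilpotent. If I is an ideal of R and J is an ideal of S such that V_R(J ∩ R) ⊆ V_R(I), then V_S(J) ⊆ V_S(I^S). -/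
open scoped Pointwise

namespace TwoSidedIdeal

variable {A B : Type*} [Ring A] [Ring B]

lemma ringCon_mk'_eq_zero_iff (K : TwoSidedIdeal A) {x : A} : K.ringCon.mk' x = 0 ↔ x ∈ K := by
  rw [← mem_ker, ker_ringCon_mk']

lemma mem_map_of_surjective {f : A →+* B} (hf : Function.Surjective f) {N : TwoSidedIdeal A}
    {y : B} : y ∈ map f N ↔ ∃ x ∈ N, f x = y := by
  refine ⟨fun hy => ?_, fun ⟨x, hx, hxy⟩ => hxy ▸ subset_span ⟨x, hx, rfl⟩⟩
  induction hy using span_induction with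
  | mem y hy => exact hy
  | zero => exact ⟨0, N.zero_mem, map_zero f⟩
  | add _ _ _ _ hx hy =>
    obtain ⟨x, hx, rfl⟩ := hx
    obtain ⟨y, hy, rfl⟩ := hy
    exact ⟨x + y, N.add_mem hx hy, map_add f x y⟩
  | neg _ _ hx =>
    obtain ⟨x, hx, rfl⟩ := hx
    exact ⟨-x, N.neg_mem hx, map_neg f x⟩
  | left_absorb b _ _ hx =>
    obtain ⟨x, hx, rfl⟩ := hx
    obtain ⟨a, rfl⟩ := hf b
    exact ⟨a * x, N.mul_mem_left a x hx, map_mul f a x⟩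
  | right_absorb b _ _ hx =>
    obtain ⟨x, hx, rfl⟩ := hx
    obtain ⟨a, rfl⟩ := hf b
    exact ⟨x * a, N.mul_mem_right x a hx, map_mul f x a⟩

def colon (P E : TwoSidedIdeal A) : TwoSidedIdeal A :=
  mk' {y | ∀ a ∈ E, a * y ∈ P}
    (fun a _ => by rw [mul_zero]; exact P.zero_mem)
    (fun hy hz a ha => by rw [mul_add]; exact P.add_mem (hy a ha) (hz a ha))
    (fun hy a ha => by rw [mul_neg]; exact P.neg_mem (hy a ha))
    (fun {s _} hy a ha => by rw [← mul_assoc]; exact hy (a * s) (E.mul_mem_right a s ha))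
    (fun {_ s} hy a ha => by rw [← mul_assoc]; exact P.mul_mem_right _ s (hy a ha))

lemma mem_colon {P E : TwoSidedIdeal A} {y : A} : y ∈ colon P E ↔ ∀ a ∈ E, a * y ∈ P :=
  mem_mk' _ _ _ _ _ _ y

end TwoSidedIdeal

open TwoSidedIdeal

section Prime

variable {A B : Type*} [Ring A] [Ring B]

lemma IsPrimeTwoSided.comap_of_surjective {P : TwoSidedIdeal B} (hP : IsPrimeTwoSided P)
    {f : A →+* B} (hf : Function.Surjective f) : IsPrimeTwoSided (P.comap f) := by
  refine ⟨fun htop => hP.1 (P.eq_top ?_), fun E F hEF => ?_⟩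
  · rw [← map_one f, ← mem_comap, htop]
    trivial
  · have hprod : ∀ a ∈ map f E, ∀ b ∈ map f F, a * b ∈ P := by
      intro a ha b hb
      obtain ⟨⟨x, hx, rfl⟩, ⟨y, hy, rfl⟩⟩ :=
        And.intro ((mem_map_of_surjective hf).1 ha) ((mem_map_of_surjective hf).1 hb)
      simpa using (mem_comap f).1 (hEF x hx y hy)
    refine (hP.2 _ _ hprod).imp (fun h x hx => ?_) (fun h x hx => ?_) <;>
      exact (mem_comap f).2 (h (subset_span ⟨x, hx, rfl⟩))

lemma ringCon_mk'_mem_primeRad {K : TwoSidedIdeal A} {x : A} (hx : x ∈ primeRad (K : Set A)) :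
    K.ringCon.mk' x ∈ primeRad (∅ : Set K.ringCon.Quotient) := by
  intro P hP _
  refine (mem_comap _).1 (hx _ (hP.comap_of_surjective K.ringCon.mk'_surjective) fun k hk => ?_)
  rw [SetLike.mem_coe, mem_comap, (ringCon_mk'_eq_zero_iff K).2 hk]
  exact P.zero_mem

lemma pow_subset_of_subset_primeRad {K : TwoSidedIdeal A}
    (hK : NilpotentPrimeRad K.ringCon.Quotient) {X : Set A} (hX : X ⊆ primeRad (K : Set A)) :
    ∃ n, X ^ n ⊆ K := by
  obtain ⟨n, -, hnil⟩ := hK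
  refine ⟨n, fun x hx => ?_⟩
  obtain ⟨g, rfl⟩ := Set.mem_pow.1 hx
  rw [SetLike.mem_coe, ← ringCon_mk'_eq_zero_iff, map_list_prod, List.map_ofFn]
  refine hnil _ List.length_ofFn fun y hy => ?_
  obtain ⟨i, rfl⟩ := List.mem_ofFn.1 hy
  exact ringCon_mk'_mem_primeRad (hX (g i).2)

lemma IsPrimeTwoSided.le_of_pow_subset {P : TwoSidedIdeal A} (hP : IsPrimeTwoSided P)
    {E : TwoSidedIdeal A} : ∀ n : ℕ, (E : Set A) ^ n ⊆ P → E ≤ P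
  | 0, h => absurd (P.eq_top (h (Set.mem_one.2 rfl))) hP.1
  | n + 1, h => by
    refine (hP.2 E (colon P E) fun a ha b hb => mem_colon.1 hb a ha).elim id fun hle => ?_
    exact hP.le_of_pow_subset n fun y hy =>
      hle (mem_colon.2 fun a ha => h (pow_succ' (E : Set A) n ▸ Set.mul_mem_mul ha hy))

end Prime

lemma Ideal.mul_mem_span_mul {A : Type*} [Ring A] {T U : Set A} {w y : A}
    (hw : w ∈ Ideal.span T) (hy : y ∈ U) : w * y ∈ Ideal.span (T * U) := by
  induction hw using Submodule.span_induction with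
  | mem t ht => exact Ideal.subset_span (Set.mul_mem_mul ht hy)
  | zero => simp
  | add _ _ _ _ hx hx' => rw [add_mul]; exact Ideal.add_mem _ hx hx'
  | smul s _ _ hx => rw [smul_eq_mul, mul_assoc]; exact Ideal.mul_mem_left _ s hx

section ExtSub

variable {S : Type*} [Ring S] (R : Subring S)

lemma mul_mem_extSub {X : Set R} {e : S} (he : e ∈ extSub R X) (s : S) :
    e * s ∈ extSub R X :=
  fun u => mul_assoc e s u ▸ he (s * u)

def extSubIdeal (X : Set R) : TwoSidedIdeal S :=
  .mk' (extSub R X)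
    (fun s => by rw [zero_mul]; exact Ideal.zero_mem _)
    (fun hx hy s => by rw [add_mul]; exact Ideal.add_mem _ (hx s) (hy s))
    (fun hx s => by rw [neg_mul]; exact (Ideal.neg_mem_iff _).2 (hx s))
    (fun {x _} hy s => by rw [mul_assoc]; exact Ideal.mul_mem_left _ x (hy s))
    (fun {_ y} hx => mul_mem_extSub R hx y)

lemma coe_extSubIdeal (X : Set R) : (extSubIdeal R X : Set S) = extSub R X :=
  TwoSidedIdeal.coe_mk' _ _ _ _ _ _

variable {R}

lemma mul_mem_span_of_mem_extSub {X : Set R} {U : Set S} {e z : S} (he : e ∈ extSub R X)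
    (hz : z ∈ Ideal.span U) : e * z ∈ Ideal.span ((Subtype.val '' X) * U) := by
  induction hz using Submodule.span_induction generalizing e with
  | mem u hu => simpa using Ideal.mul_mem_span_mul (he 1) hu
  | zero => simp
  | add _ _ _ _ hz hz' => rw [mul_add]; exact Ideal.add_mem _ (hz he) (hz' he)
  | smul s _ _ hz => rw [smul_eq_mul, ← mul_assoc]; exact hz (mul_mem_extSub R he s)

lemma extSub_pow_subset_span (X : Set R) :
    ∀ n : ℕ, extSub R X ^ n ⊆ Ideal.span ((Subtype.val '' X) ^ n)
  | 0 => by simp only [pow_zero, Set.one_subset]; exact Ideal.subset_span (Set.mem_one.2 rfl)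
  | n + 1 => by
    rw [pow_succ']
    rintro _ ⟨e, he, z, hz, rfl⟩
    rw [pow_succ']
    exact mul_mem_span_of_mem_extSub he (extSub_pow_subset_span X n hz)

end ExtSub

theorem statement_8_general {S : Type*} [Ring S] (R : Subring S)
    (hRN : FactorRadsNilpotent R)
    (I : TwoSidedIdeal R) (J : TwoSidedIdeal S)
    (h : zarV (restrSet R (J : Set S)) ⊆ zarV (I : Set R)) :
    zarV (J : Set S) ⊆ zarV (extSub R (I : Set R)) := by
  rintro P ⟨hP, hJP⟩
  refine ⟨hP, ?_⟩
  set K := P.comap R.subtype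
  have hIK : (I : Set R) ⊆ primeRad (K : Set R) := fun i hi Q hQ hKQ =>
    (h ⟨hQ, fun x hx => hKQ ((mem_comap _).2 (hJP hx))⟩).2 hi
  obtain ⟨n, hn⟩ := pow_subset_of_subset_primeRad (hRN K) hIK
  have hspan : Ideal.span ((Subtype.val '' (I : Set R)) ^ n) ≤ P.asIdeal := by
    rw [Ideal.span_le, coe_asIdeal, ← Subring.coe_subtype, ← Set.image_pow]
    rintro _ ⟨x, hx, rfl⟩
    exact (mem_comap _).1 (hn hx)
  rw [← coe_extSubIdeal]
  exact hP.le_of_pow_subset n <| coe_extSubIdeal R _ ▸ (extSub_pow_subset_span _ n).trans hspan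

/-- Let `R` be a subring of `S`, with the Goldie/nilpotence
hypotheses of (3.7). If `I` is an ideal of `R` and `J` an ideal of `S` with
`V_R(J ∩ R) ⊆ V_R(I)`, then `V_S(J) ⊆ V_S(I^S)`. -/
theorem statement_8 {S : Type*} [Ring S] (R : Subring S)
    (hRG : SemiprimeFactorsGoldie R) (hSG : SemiprimeFactorsGoldie S)
    (hRN : FactorRadsNilpotent R) (hSN : FactorRadsNilpotent S)
    (I : TwoSidedIdeal R) (J : TwoSidedIdeal S)
    (h : zarV (restrSet R (J : Set S)) ⊆ zarV (I : Set R)) :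
    zarV (J : Set S) ⊆ zarV (extSub R (I : Set R)) :=
  statement_8_general R hRN I J h
end

section
/- Let R be a subring of a ring S, and assume that every semiprime factor ring of R and of S is left or right Goldie and that the prime radical of every factor ring of R and of S is nilpotent. Then λ is a left adjoint to ρ if and only if for all ideals I of R and J of S, V_S(J) ⊆ V_S(I^S) implies V_R(J ∩ R) ⊆ V_R(I). -/
namespace St9

variable {A : Type*} [Ring A]

lemma subset_primeRad (X : Set A) : X ⊆ primeRad X :=
  fun _x hx P hP hXP => hXP hx

lemma zarV_primeRad (X : Set A) : zarV (primeRad X) = zarV X := by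
  ext P
  exact ⟨fun ⟨hP, h⟩ => ⟨hP, (subset_primeRad X).trans h⟩,
    fun ⟨hP, h⟩ => ⟨hP, fun a ha => ha P hP h⟩⟩

lemma primeRad_idem (X : Set A) : primeRad (primeRad X) = primeRad X := by
  refine subset_antisymm (fun a ha P hP hXP => ?_) (subset_primeRad _)
  exact ha P hP (fun b hb => hb P hP hXP)

/-- The prime radical as a two-sided ideal. -/
def radIdeal (X : Set A) : TwoSidedIdeal A :=
  TwoSidedIdeal.mk' (primeRad X)
    (fun P _ _ => P.zero_mem)
    (fun hx hy P hP hXP => P.add_mem (hx P hP hXP) (hy P hP hXP))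
    (fun hx P hP hXP => P.neg_mem (hx P hP hXP))
    (fun hy P hP hXP => P.mul_mem_left _ _ (hy P hP hXP))
    (fun hx P hP hXP => P.mul_mem_right _ _ (hx P hP hXP))

lemma coe_radIdeal (X : Set A) : ((radIdeal X : TwoSidedIdeal A) : Set A) = primeRad X :=
  TwoSidedIdeal.coe_mk' _ _ _ _ _ _

/-- If all `n`-fold products of elements of `T` lie in the prime `P`, then `T ≤ P`. -/
lemma le_prime_of_prods {P : TwoSidedIdeal A} (hP : IsPrimeTwoSided P) {T : TwoSidedIdeal A} :
    ∀ n : ℕ, 0 < n →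
      (∀ l : List A, l.length = n → (∀ x ∈ l, x ∈ T) → l.prod ∈ P) → T ≤ P := by
  intro n
  induction n with
  | zero => omega
  | succ m ih =>
    intro _ hl
    rcases Nat.eq_zero_or_pos m with hm | hm
    · subst hm
      intro t ht
      simpa using hl [t] rfl (by simpa using ht)
    · set W : TwoSidedIdeal A := TwoSidedIdeal.mk' {x : A | ∀ a ∈ T, a * x ∈ P}
        (fun a _ => by rw [mul_zero]; exact P.zero_mem)
        (fun hx hy a ha => by rw [mul_add]; exact P.add_mem (hx a ha) (hy a ha))
        (fun hx a ha => by rw [mul_neg]; exact P.neg_mem (hx a ha))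
        (fun {x y} hy a ha => by rw [← mul_assoc]; exact hy (a * x) (T.mul_mem_right a x ha))
        (fun {x y} hx a ha => by rw [← mul_assoc]; exact P.mul_mem_right _ y (hx a ha))
        with hW
      rcases hP.2 T W (fun a ha b hb => by
        rw [hW, TwoSidedIdeal.mem_mk'] at hb; exact hb a ha) with h | h
      · exact h
      · refine ih hm (fun l hlen hmem => ?_)
        have : l.prod ∈ W := by
          rw [hW, TwoSidedIdeal.mem_mk']
          intro a ha
          have := hl (a :: l) (by simp [hlen]) (by
            intro x hx
            rcases List.mem_cons.mp hx with rfl | hx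
            · exact ha
            · exact hmem x hx)
          simpa using this
        exact h this

lemma span_subset_ideal (P : TwoSidedIdeal A) {T : Set A} (hT : T ⊆ (P : Set A)) :
    ∀ z ∈ Ideal.span T, z ∈ P := by
  intro z hz
  induction hz using Submodule.span_induction with
  | mem x hx => exact hT hx
  | zero => exact P.zero_mem
  | add x y _ _ hx hy => exact P.add_mem hx hy
  | smul s x _ hx => rw [smul_eq_mul]; exact P.mul_mem_left s x hx

lemma mk'_mem_primeRad {I : TwoSidedIdeal A} {x : A}
    (hx : x ∈ primeRad (I : Set A)) :
    I.ringCon.mk' x ∈ primeRad (∅ : Set I.ringCon.Quotient) := by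
  intro Q hQ _
  set π : A →+* I.ringCon.Quotient := I.ringCon.mk' with hπ
  have hsurj : Function.Surjective π := fun y => Quotient.inductionOn' y (fun a => ⟨a, rfl⟩)
  set P : TwoSidedIdeal A := TwoSidedIdeal.mk' (π ⁻¹' (Q : Set I.ringCon.Quotient))
    (by simp only [Set.mem_preimage, map_zero]; exact Q.zero_mem)
    (fun hx hy => by simp only [Set.mem_preimage, map_add] at *; exact Q.add_mem hx hy)
    (fun hx => by simp only [Set.mem_preimage, map_neg] at *; exact Q.neg_mem hx)
    (fun hy => by simp only [Set.mem_preimage, map_mul] at *; exact Q.mul_mem_left _ _ hy)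
    (fun hx => by simp only [Set.mem_preimage, map_mul] at *; exact Q.mul_mem_right _ _ hx)
    with hP
  have hmemP : ∀ a : A, a ∈ P ↔ π a ∈ Q := fun a => by
    rw [hP, TwoSidedIdeal.mem_mk']; rfl
  have hPprime : IsPrimeTwoSided P := by
    constructor
    · intro htop
      have h1 : (1 : A) ∈ P := htop ▸ (TwoSidedIdeal.mem_top A : (1 : A) ∈ ⊤)
      rw [hmemP, map_one] at h1
      exact hQ.1 (TwoSidedIdeal.eq_top _ h1)
    · intro I₁ J₁ hIJ
      let mkIdeal : TwoSidedIdeal A → TwoSidedIdeal I.ringCon.Quotient := fun T =>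
        TwoSidedIdeal.mk' (π '' (T : Set A))
          ⟨0, T.zero_mem, map_zero π⟩
          (fun h1 h2 => by
            obtain ⟨a, ha, rfl⟩ := h1; obtain ⟨b, hb, rfl⟩ := h2
            exact ⟨a + b, T.add_mem ha hb, map_add π a b⟩)
          (fun h1 => by
            obtain ⟨a, ha, rfl⟩ := h1
            exact ⟨-a, T.neg_mem ha, map_neg π a⟩)
          (fun {x y} h1 => by
            obtain ⟨a, ha, rfl⟩ := h1
            obtain ⟨r, rfl⟩ := hsurj x
            exact ⟨r * a, T.mul_mem_left r a ha, map_mul π r a⟩)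
          (fun {x y} h1 => by
            obtain ⟨a, ha, rfl⟩ := h1
            obtain ⟨r, rfl⟩ := hsurj y
            exact ⟨a * r, T.mul_mem_right a r ha, map_mul π a r⟩)
      have hmemMk : ∀ (T : TwoSidedIdeal A) (y), y ∈ mkIdeal T ↔ y ∈ π '' (T : Set A) :=
        fun T y => TwoSidedIdeal.mem_mk' _ _ _ _ _ _ y
      rcases hQ.2 (mkIdeal I₁) (mkIdeal J₁) (fun a ha b hb => by
        rw [hmemMk] at ha hb
        obtain ⟨a, ha, rfl⟩ := ha; obtain ⟨b, hb, rfl⟩ := hb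
        rw [← map_mul]
        exact (hmemP _).mp (hIJ a ha b hb)) with h | h
      · exact Or.inl (fun a ha => (hmemP a).mpr (h ((hmemMk I₁ _).mpr ⟨a, ha, rfl⟩)))
      · exact Or.inr (fun b hb => (hmemP b).mpr (h ((hmemMk J₁ _).mpr ⟨b, hb, rfl⟩)))
  have hIP : (I : Set A) ⊆ (P : Set A) := by
    intro i hi
    rw [SetLike.mem_coe, hmemP]
    have : π i = π 0 := I.ringCon.eq.mpr (by simpa using (I.rel_iff i 0).mpr (by simpa using hi))
    rw [this, map_zero]
    exact Q.zero_mem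
  exact (hmemP x).mp (hx P hPprime hIP)

lemma nilp_primeRad_lists (hN : FactorRadsNilpotent A) (I : TwoSidedIdeal A) :
    ∃ n : ℕ, 0 < n ∧ ∀ l : List A, l.length = n →
      (∀ x ∈ l, x ∈ primeRad (I : Set A)) → l.prod ∈ I := by
  obtain ⟨n, hn, hprod⟩ := hN I
  refine ⟨n, hn, fun l hlen hmem => ?_⟩
  set π : A →+* I.ringCon.Quotient := I.ringCon.mk'
  have h0 : (l.map π).prod = 0 := by
    refine hprod _ (by simp [hlen]) ?_
    intro y hy
    obtain ⟨x, hx, rfl⟩ := List.mem_map.mp hy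
    exact mk'_mem_primeRad (hmem x hx)
  rw [← map_list_prod π l] at h0
  have : π l.prod = π 0 := by rw [h0, map_zero]
  have := I.ringCon.eq.mp this
  rw [I.rel_iff] at this
  simpa using this

variable {S : Type*} [Ring S] (R : Subring S)

/-- `extSub R X` as a two-sided ideal. -/
def extIdeal (X : Set R) : TwoSidedIdeal S :=
  TwoSidedIdeal.mk' (extSub R X)
    (fun s => by rw [zero_mul]; exact Ideal.zero_mem _)
    (fun hx hy s => by rw [add_mul]; exact Ideal.add_mem _ (hx s) (hy s))
    (fun hx s => by rw [neg_mul]; exact neg_mem (hx s))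
    (fun {x y} hy s => by rw [mul_assoc]; exact Ideal.mul_mem_left _ x (hy s))
    (fun {x y} hx s => by rw [mul_assoc]; exact hx (y * s))

lemma mem_extIdeal (X : Set R) (a : S) : a ∈ extIdeal R X ↔ a ∈ extSub R X :=
  TwoSidedIdeal.mem_mk' _ _ _ _ _ _ a

/-- `k`-fold products of elements of `X`. -/
def nProds (X : Set R) (k : ℕ) : Set R :=
  {x | ∃ l : List R, l.length = k ∧ (∀ y ∈ l, y ∈ X) ∧ l.prod = x}

lemma extSub_mul_span {X : Set R} {k : ℕ} :
    ∀ y ∈ Ideal.span (Subtype.val '' nProds R X k),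
      ∀ t ∈ extSub R X, t * y ∈ Ideal.span (Subtype.val '' nProds R X (k + 1)) := by
  intro y hy
  induction hy using Submodule.span_induction with
  | mem p hp =>
    obtain ⟨p, hp, rfl⟩ := hp
    intro t ht
    have ht1 : t ∈ Ideal.span (Subtype.val '' X) := by simpa using ht 1
    clear ht
    induction ht1 using Submodule.span_induction with
    | mem x hx =>
      obtain ⟨x, hx, rfl⟩ := hx
      obtain ⟨l, hl, hlX, hlp⟩ := hp
      refine Ideal.subset_span
        ⟨x * p, ⟨⟨x :: l, by simp [hl], ?_, by simp [List.prod_cons, hlp]⟩, rfl⟩⟩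
      intro z hz
      rcases List.mem_cons.mp hz with rfl | hz
      · exact hx
      · exact hlX z hz
    | zero => simpa using Ideal.zero_mem _
    | add z w _ _ hz hw => rw [add_mul]; exact Ideal.add_mem _ hz hw
    | smul s z _ hz =>
      rw [smul_eq_mul, mul_assoc] at *
      exact Ideal.mul_mem_left _ s hz
  | zero => intro t _; simpa using Ideal.zero_mem _
  | add z w _ _ hz hw => intro t ht; rw [mul_add]; exact Ideal.add_mem _ (hz t ht) (hw t ht)
  | smul s z _ hz =>
    intro t ht
    rw [smul_eq_mul, ← mul_assoc]
    refine hz (t * s) ?_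
    intro u
    rw [mul_assoc]
    exact ht (s * u)

lemma prod_extSub_mem_span {X : Set R} :
    ∀ l : List S, (∀ t ∈ l, t ∈ extSub R X) →
      ∀ s : S, l.prod * s ∈ Ideal.span (Subtype.val '' nProds R X l.length) := by
  intro l
  induction l with
  | nil =>
    intro _ s
    have h1 : ((1 : R) : S) ∈ Subtype.val '' nProds R X 0 :=
      ⟨1, ⟨[], rfl, by simp, by simp⟩, rfl⟩
    have := Ideal.mul_mem_left (Ideal.span (Subtype.val '' nProds R X 0)) s
      (Ideal.subset_span h1)
    simpa using this
  | cons t l ih =>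
    intro hmem s
    rw [List.prod_cons, mul_assoc]
    have hy := ih (fun u hu => hmem u (List.mem_cons_of_mem t hu)) s
    have := extSub_mul_span R _ hy t (hmem t List.mem_cons_self)
    simpa using this

/-- If all `n`-fold products of elements of `X ⊆ R` lie in the ideal `K` of `R`, then
any product of `n` elements of `extSub R X` lies in `extSub R K`. -/
lemma prods_extSub {X : Set R} {K : TwoSidedIdeal R} {n : ℕ}
    (hK : ∀ l : List R, l.length = n → (∀ x ∈ l, x ∈ X) → l.prod ∈ K) :
    ∀ l : List S, l.length = n → (∀ t ∈ l, t ∈ extSub R X) →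
      l.prod ∈ extSub R (K : Set R) := by
  intro l hlen hmem s
  have h := prod_extSub_mem_span R l hmem s
  rw [hlen] at h
  refine Ideal.span_mono (Set.image_mono ?_) h
  rintro x ⟨lx, h1, h2, rfl⟩
  exact hK lx h1 h2

/-- `V_R(J ∩ R) ⊆ V_R(I)` implies `V_S(J) ⊆ V_S(I^S)` — holds for all ideals, using
nilpotence of prime radicals of factor rings of `R`. -/
lemma lemL (hRN : FactorRadsNilpotent R) (I : TwoSidedIdeal R) (J : TwoSidedIdeal S)
    (h : zarV (restrSet R (J : Set S)) ⊆ zarV (I : Set R)) :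
    zarV (J : Set S) ⊆ zarV (extSub R (I : Set R)) := by
  rintro P ⟨hP, hJP⟩
  refine ⟨hP, ?_⟩
  set K : TwoSidedIdeal R := TwoSidedIdeal.mk' (restrSet R (P : Set S))
    (by show ((0 : R) : S) ∈ P; rw [Subring.coe_zero]; exact P.zero_mem)
    (fun {x y} hx hy => by
      show ((x + y : R) : S) ∈ P; rw [Subring.coe_add]; exact P.add_mem hx hy)
    (fun {x} hx => by show ((-x : R) : S) ∈ P; rw [Subring.coe_neg]; exact P.neg_mem hx)
    (fun {x y} hy => by show ((x * y : R) : S) ∈ P; rw [Subring.coe_mul]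
                        exact P.mul_mem_left _ _ hy)
    (fun {x y} hx => by show ((x * y : R) : S) ∈ P; rw [Subring.coe_mul]
                        exact P.mul_mem_right _ _ hx)
    with hKdef
  have hKmem : ∀ x : R, x ∈ K ↔ (x : S) ∈ P := fun x => by
    rw [hKdef, TwoSidedIdeal.mem_mk']; rfl
  have hIrad : (I : Set R) ⊆ primeRad (K : Set R) := by
    intro a ha Q hQ hKQ
    have hQ' : Q ∈ zarV (restrSet R (J : Set S)) :=
      ⟨hQ, fun x hx => hKQ (show x ∈ (K : Set R) from (hKmem x).mpr (hJP hx))⟩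
    exact (h hQ').2 ha
  obtain ⟨n, hn, hprods⟩ := nilp_primeRad_lists hRN K
  have hext : ∀ l : List S, l.length = n →
      (∀ t ∈ l, t ∈ extIdeal R (I : Set R)) → l.prod ∈ P := by
    intro l h1 h2
    have hmem := prods_extSub R (K := K) (n := n)
      (fun l h1 h2 => hprods l h1 (fun x hx => hIrad (h2 x hx))) l h1
      (fun t ht => (mem_extIdeal R _ t).mp (h2 t ht))
    have h1' : l.prod ∈ Ideal.span (Subtype.val '' (K : Set R)) := by
      simpa using hmem 1
    refine span_subset_ideal P ?_ _ h1'
    rintro _ ⟨x, hx, rfl⟩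
    exact (hKmem x).mp hx
  intro a ha
  exact le_prime_of_prods hP n hn hext ((mem_extIdeal R _ a).mpr ha)

end St9

/-- Let `R` be a subring of `S`, with the Goldie/nilpotence
hypotheses of (3.7). Then `λ` is a left adjoint to `ρ` if and only if for all ideals
`I` of `R` and `J` of `S`, `V_S(J) ⊆ V_S(I^S)` implies `V_R(J ∩ R) ⊆ V_R(I)`. -/
theorem statement_9 {S : Type*} [Ring S] (R : Subring S)
    (hRG : SemiprimeFactorsGoldie R) (hSG : SemiprimeFactorsGoldie S)
    (hRN : FactorRadsNilpotent R) (hSN : FactorRadsNilpotent S) :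
    AdjSub R ↔
      ∀ (I : TwoSidedIdeal R) (J : TwoSidedIdeal S),
        zarV (J : Set S) ⊆ zarV (extSub R (I : Set R)) →
          zarV (restrSet R (J : Set S)) ⊆ zarV (I : Set R) := by
  constructor
  · -- adjunction implies the implication for all ideals
    intro hAdj I J h
    set I' : TwoSidedIdeal R := St9.radIdeal (I : Set R) with hI'
    set J' : TwoSidedIdeal S := St9.radIdeal (J : Set S) with hJ'
    have hI'coe : (I' : Set R) = primeRad (I : Set R) := St9.coe_radIdeal _
    have hJ'coe : (J' : Set S) = primeRad (J : Set S) := St9.coe_radIdeal _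
    have hI'sp : primeRad (I' : Set R) = (I' : Set R) := by
      rw [hI'coe, St9.primeRad_idem]
    have hJ'sp : primeRad (J' : Set S) = (J' : Set S) := by
      rw [hJ'coe, St9.primeRad_idem]
    -- V_S(J') ⊆ V_S((I')^S)
    have h1 : zarV (J' : Set S) ⊆ zarV (extSub R (I' : Set R)) := by
      intro P hPm
      rw [hJ'coe, St9.zarV_primeRad] at hPm
      obtain ⟨hP, hJP⟩ := hPm
      have hPext : extSub R (I : Set R) ⊆ (P : Set S) := (h ⟨hP, hJP⟩).2
      refine ⟨hP, ?_⟩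
      rw [hI'coe]
      obtain ⟨n, hn, hpr⟩ := St9.nilp_primeRad_lists hRN I
      have hext : ∀ l : List S, l.length = n →
          (∀ t ∈ l, t ∈ St9.extIdeal R (primeRad (I : Set R))) → l.prod ∈ P := by
        intro l h1 h2
        have hmem := St9.prods_extSub R (K := I) (n := n) hpr l h1
          (fun t ht => (St9.mem_extIdeal R _ t).mp (h2 t ht))
        exact hPext hmem
      intro a ha
      exact St9.le_prime_of_prods hP n hn hext ((St9.mem_extIdeal R _ a).mpr ha)
    have h2 := (hAdj J' hJ'sp I' hI'sp).mpr h1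
    -- now shrink back
    intro Q hQ
    obtain ⟨hQp, hQJ⟩ := hQ
    have hQ' : Q ∈ zarV (restrSet R (J' : Set S)) := by
      rw [hJ'coe]
      refine ⟨hQp, ?_⟩
      obtain ⟨n, hn, hpr⟩ := St9.nilp_primeRad_lists hSN J
      set K' : TwoSidedIdeal R := TwoSidedIdeal.mk' (restrSet R (primeRad (J : Set S)))
        (fun P _ _ => by rw [Subring.coe_zero]; exact P.zero_mem)
        (fun {x y} hx hy P hP hXP => by
          rw [Subring.coe_add]; exact P.add_mem (hx P hP hXP) (hy P hP hXP))
        (fun {x} hx P hP hXP => by rw [Subring.coe_neg]; exact P.neg_mem (hx P hP hXP))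
        (fun {x y} hy P hP hXP => by
          rw [Subring.coe_mul]; exact P.mul_mem_left _ _ (hy P hP hXP))
        (fun {x y} hx P hP hXP => by
          rw [Subring.coe_mul]; exact P.mul_mem_right _ _ (hx P hP hXP))
        with hK'def
      have hK'mem : ∀ x : R, x ∈ K' ↔ (x : S) ∈ primeRad (J : Set S) := fun x => by
        rw [hK'def]; exact TwoSidedIdeal.mem_mk' _ _ _ _ _ _ x
      have hext : ∀ l : List R, l.length = n → (∀ x ∈ l, x ∈ K') → l.prod ∈ Q := by
        intro l h1 h2
        have hmap : (l.map (R.subtype)).prod ∈ J := by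
          refine hpr _ (by simp [h1]) ?_
          intro y hy
          obtain ⟨x, hx, rfl⟩ := List.mem_map.mp hy
          exact (hK'mem x).mp (h2 x hx)
        rw [← map_list_prod (R.subtype) l] at hmap
        exact hQJ (show l.prod ∈ restrSet R (J : Set S) from hmap)
      intro x hx
      exact St9.le_prime_of_prods hQp n hn hext ((hK'mem x).mpr hx)
    have h3 := h2 hQ'
    rw [hI'coe] at h3
    exact ⟨hQp, (St9.subset_primeRad _).trans h3.2⟩
  · -- the implication yields the adjunction
    intro hImp J _ I _
    exact ⟨fun h => St9.lemL R hRN I J h, fun h => hImp I J h⟩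
end

section
/- Let R be a subring of a ring S, and assume that every semiprime factor ring of R and of S is left or right Goldie and that the prime radical of every factor ring of R and of S is nilpotent. Then for every ideal J of S, V_R(J ∩ R) = V_R(√J ∩ R); that is, the functor λ sends the closed set V_S(J) to V_R(J ∩ R). -/
section Aux

variable {A : Type*} [Ring A]

lemma primeRad_subset_mem {X : Set A} {x : A} (hx : x ∈ X) : x ∈ primeRad X :=
  fun _ _ hX => hX hx

/-- If all products of `n ≥ 1` elements of `I` lie in the prime `P`, then `I ≤ P`. -/
lemma le_of_prod_mem (P : TwoSidedIdeal A) (hP : IsPrimeTwoSided P) (I : TwoSidedIdeal A) :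
    ∀ n : ℕ, 0 < n →
      (∀ l : List A, l.length = n → (∀ x ∈ l, x ∈ I) → l.prod ∈ P) → I ≤ P := by
  intro n
  induction n with
  | zero => intro h; exact absurd h (lt_irrefl 0)
  | succ n ih =>
    intro _ hprod
    by_cases hn : n = 0
    · subst hn
      intro x hx
      have := hprod [x] rfl (by intro y hy; simp at hy; subst hy; exact hx)
      simpa using this
    · set K : TwoSidedIdeal A := TwoSidedIdeal.mk' {b | ∀ a ∈ I, a * b ∈ P}
        (fun a _ => by simpa using P.zero_mem)
        (fun {x y} hx hy a ha => by rw [mul_add]; exact P.add_mem (hx a ha) (hy a ha))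
        (fun {x} hx a ha => by rw [mul_neg]; exact P.neg_mem (hx a ha))
        (fun {x y} hy a ha => by
          rw [← mul_assoc]; exact hy (a * x) (I.mul_mem_right a x ha))
        (fun {x y} hx a ha => by
          rw [← mul_assoc]; exact P.mul_mem_right _ y (hx a ha)) with hK
      rcases hP.2 I K (fun a ha b hb => by
        rw [hK, TwoSidedIdeal.mem_mk'] at hb; exact hb a ha) with h | h
      · exact h
      · refine ih (Nat.pos_of_ne_zero hn) (fun l hl hmem => ?_)
        apply h
        rw [hK, TwoSidedIdeal.mem_mk']
        intro a ha
        have := hprod (a :: l) (by simp [hl]) (by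
          intro x hx
          rcases List.mem_cons.1 hx with rfl | hx
          · exact ha
          · exact hmem x hx)
        simpa using this

variable (J : TwoSidedIdeal A)

local notation "π" => RingCon.mk' J.ringCon

lemma pi_eq_zero_iff (x : A) : π x = 0 ↔ x ∈ J := by
  have h0 : (0 : J.ringCon.Quotient) = π (0 : A) := rfl
  rw [h0]
  show (x : J.ringCon.Quotient) = ((0 : A) : J.ringCon.Quotient) ↔ _
  rw [RingCon.eq, ← TwoSidedIdeal.mem_iff]

lemma pi_surjective : Function.Surjective (π : A → J.ringCon.Quotient) :=
  fun q => Quotient.inductionOn' q (fun s => ⟨s, rfl⟩)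

/-- Pull back a two-sided ideal of the quotient to `A`. -/
def comapPi (Q : TwoSidedIdeal J.ringCon.Quotient) : TwoSidedIdeal A :=
  TwoSidedIdeal.mk' ((π : A → J.ringCon.Quotient) ⁻¹' Q)
    (by simp [Set.mem_preimage, map_zero])
    (fun {x y} hx hy => by
      simp only [Set.mem_preimage, SetLike.mem_coe, map_add] at *; exact Q.add_mem hx hy)
    (fun {x} hx => by
      simp only [Set.mem_preimage, SetLike.mem_coe, map_neg] at *; exact Q.neg_mem hx)
    (fun {x y} hy => by
      simp only [Set.mem_preimage, SetLike.mem_coe, map_mul] at *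
      exact Q.mul_mem_left _ _ hy)
    (fun {x y} hx => by
      simp only [Set.mem_preimage, SetLike.mem_coe, map_mul] at *
      exact Q.mul_mem_right _ _ hx)

lemma mem_comapPi {Q : TwoSidedIdeal J.ringCon.Quotient} {x : A} :
    x ∈ comapPi J Q ↔ π x ∈ Q := by
  exact TwoSidedIdeal.mem_mk' _ _ _ _ _ _ _

/-- Push forward a two-sided ideal of `A` to the quotient. -/
def mapPi (I : TwoSidedIdeal A) : TwoSidedIdeal J.ringCon.Quotient :=
  TwoSidedIdeal.mk' ((π : A → J.ringCon.Quotient) '' I)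
    ⟨0, I.zero_mem, map_zero _⟩
    (fun {x y} hx hy => by
      obtain ⟨a, ha, rfl⟩ := hx; obtain ⟨b, hb, rfl⟩ := hy
      exact ⟨a + b, I.add_mem ha hb, map_add _ _ _⟩)
    (fun {x} hx => by
      obtain ⟨a, ha, rfl⟩ := hx
      exact ⟨-a, I.neg_mem ha, map_neg _ _⟩)
    (fun {x y} hy => by
      obtain ⟨b, hb, rfl⟩ := hy
      obtain ⟨a, rfl⟩ := pi_surjective J x
      exact ⟨a * b, I.mul_mem_left a b hb, map_mul _ _ _⟩)
    (fun {x y} hx => by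
      obtain ⟨a, ha, rfl⟩ := hx
      obtain ⟨b, rfl⟩ := pi_surjective J y
      exact ⟨a * b, I.mul_mem_right a b ha, map_mul _ _ _⟩)

lemma comapPi_prime {Q : TwoSidedIdeal J.ringCon.Quotient} (hQ : IsPrimeTwoSided Q) :
    IsPrimeTwoSided (comapPi J Q) := by
  constructor
  · intro h
    apply hQ.1
    apply TwoSidedIdeal.eq_top
    have : (1 : A) ∈ comapPi J Q := h ▸ trivial
    rw [mem_comapPi] at this
    simpa using this
  · intro I I' hII'
    rcases hQ.2 (mapPi J I) (mapPi J I') (by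
      intro a ha b hb
      replace ha : a ∈ (π : A → J.ringCon.Quotient) '' I := (TwoSidedIdeal.mem_mk' _ _ _ _ _ _ _).1 ha
      replace hb : b ∈ (π : A → J.ringCon.Quotient) '' I' := (TwoSidedIdeal.mem_mk' _ _ _ _ _ _ _).1 hb
      obtain ⟨x, hx, rfl⟩ := ha; obtain ⟨y, hy, rfl⟩ := hb
      rw [← map_mul]
      exact (mem_comapPi J).1 (hII' x hx y hy)) with h | h
    · left
      intro x hx
      have : π x ∈ Q := h ((TwoSidedIdeal.mem_mk' _ _ _ _ _ _ _).2 (show π x ∈ (π : A → J.ringCon.Quotient) '' I from ⟨x, hx, rfl⟩))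
      exact (mem_comapPi J).2 this
    · right
      intro x hx
      have : π x ∈ Q := h ((TwoSidedIdeal.mem_mk' _ _ _ _ _ _ _).2 (show π x ∈ (π : A → J.ringCon.Quotient) '' I' from ⟨x, hx, rfl⟩))
      exact (mem_comapPi J).2 this

lemma primeRad_map {x : A} (hx : x ∈ primeRad (J : Set A)) :
    π x ∈ primeRad (∅ : Set J.ringCon.Quotient) := by
  intro Q hQ _
  have hJ : (J : Set A) ⊆ ((comapPi J Q : TwoSidedIdeal A) : Set A) := by
    intro j hj
    rw [SetLike.mem_coe, mem_comapPi, (pi_eq_zero_iff J j).2 hj]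
    exact Q.zero_mem
  have := hx (comapPi J Q) (comapPi_prime J hQ) hJ
  exact (mem_comapPi J).1 this

end Aux

lemma primeRad_zero {A : Type*} [Ring A] (X : Set A) : (0 : A) ∈ primeRad X :=
  fun P _ _ => P.zero_mem

lemma primeRad_add {A : Type*} [Ring A] {X : Set A} {x y : A}
    (hx : x ∈ primeRad X) (hy : y ∈ primeRad X) : x + y ∈ primeRad X :=
  fun P hP hX => P.add_mem (hx P hP hX) (hy P hP hX)

lemma primeRad_neg {A : Type*} [Ring A] {X : Set A} {x : A}
    (hx : x ∈ primeRad X) : -x ∈ primeRad X :=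
  fun P hP hX => P.neg_mem (hx P hP hX)

lemma primeRad_mul_left {A : Type*} [Ring A] {X : Set A} (x : A) {y : A}
    (hy : y ∈ primeRad X) : x * y ∈ primeRad X :=
  fun P hP hX => P.mul_mem_left x y (hy P hP hX)

lemma primeRad_mul_right {A : Type*} [Ring A] {X : Set A} {x : A} (y : A)
    (hx : x ∈ primeRad X) : x * y ∈ primeRad X :=
  fun P hP hX => P.mul_mem_right x y (hx P hP hX)

/-- Let `R` be a subring of `S`, with the Goldie/nilpotence
hypotheses of (3.7). Then for every ideal `J` of `S`, `V_R(J ∩ R) = V_R(√J ∩ R)`;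
that is, the functor `λ` sends the closed set `V_S(J)` to `V_R(J ∩ R)`. -/
theorem statement_10 {S : Type*} [Ring S] (R : Subring S)
    (hRG : SemiprimeFactorsGoldie R) (hSG : SemiprimeFactorsGoldie S)
    (hRN : FactorRadsNilpotent R) (hSN : FactorRadsNilpotent S) :
    ∀ J : TwoSidedIdeal S,
      zarV (restrSet R (J : Set S)) = zarV (restrSet R (primeRad (J : Set S))) := by
  intro J
  obtain ⟨n, hn, hnil⟩ := hSN J
  apply Set.Subset.antisymm
  · rintro P ⟨hP, hle⟩
    refine ⟨hP, ?_⟩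
    set I : TwoSidedIdeal R := TwoSidedIdeal.mk' (restrSet R (primeRad (J : Set S)))
      (by simpa [restrSet] using primeRad_zero (J : Set S))
      (fun {x y} hx hy => by
        simp only [restrSet, Set.mem_preimage, Subring.coe_add] at *
        exact primeRad_add hx hy)
      (fun {x} hx => by
        simp only [restrSet, Set.mem_preimage, Subring.coe_neg] at *
        exact primeRad_neg hx)
      (fun {x y} hy => by
        simp only [restrSet, Set.mem_preimage, Subring.coe_mul] at *
        exact primeRad_mul_left _ hy)
      (fun {x y} hx => by
        simp only [restrSet, Set.mem_preimage, Subring.coe_mul] at *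
        exact primeRad_mul_right _ hx) with hI
    have hIP : I ≤ P := by
      apply le_of_prod_mem P hP I n hn
      intro l hl hmem
      have hmemrad : ∀ z ∈ l, (z : S) ∈ primeRad (J : Set S) := by
        intro z hz
        have := hmem z hz
        rw [hI, TwoSidedIdeal.mem_mk'] at this
        exact this
      -- the product of the images lies in J
      have hprodJ : ((l.map (Subtype.val : R → S)).prod) ∈ J := by
        rw [← pi_eq_zero_iff J, map_list_prod]
        apply hnil
        · simp [hl]
        · intro x hx
          rw [List.map_map, List.mem_map] at hx
          obtain ⟨z, hz, rfl⟩ := hx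
          exact primeRad_map J (hmemrad z hz)
      have hval : ((l.map (Subtype.val : R → S)).prod) = ((l.prod : R) : S) := by
        simpa using (map_list_prod R.subtype l).symm
      apply hle
      show ((l.prod : R) : S) ∈ (J : Set S)
      rw [← hval]
      exact hprodJ
    intro x hx
    apply hIP
    rw [hI, TwoSidedIdeal.mem_mk']
    exact hx
  · rintro P ⟨hP, hle⟩
    refine ⟨hP, fun x hx => hle ?_⟩
    exact fun Q hQ hXQ => hXQ hx
end

section
/- Let R be a subring of a ring S, and assume that every semiprime factor ring of R and of S is left or right Goldie and that the prime radical of every factor ring of R and of S is nilpotent. Then for every ideal I of R, V_S(I^S) = V_S((√I)^S); that is, the functor ρ sends the closed set V_R(I) to V_S(I^S). -/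
section Aux

variable {A B : Type*} [Ring A] [Ring B]

/-- Preimage of a two-sided ideal under a ring hom. -/
def auxComap (f : A →+* B) (P : TwoSidedIdeal B) : TwoSidedIdeal A :=
  TwoSidedIdeal.mk' (f ⁻¹' (P : Set B))
    (by simp only [Set.mem_preimage, map_zero, SetLike.mem_coe]; exact P.zero_mem)
    (fun {a b} ha hb => by
      simp only [Set.mem_preimage, map_add, SetLike.mem_coe] at *
      exact P.add_mem ha hb)
    (fun {a} ha => by
      simp only [Set.mem_preimage, map_neg, SetLike.mem_coe] at *
      exact P.neg_mem ha)
    (fun {a b} hb => by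
      simp only [Set.mem_preimage, map_mul, SetLike.mem_coe] at *
      exact P.mul_mem_left _ _ hb)
    (fun {a b} ha => by
      simp only [Set.mem_preimage, map_mul, SetLike.mem_coe] at *
      exact P.mul_mem_right _ _ ha)

lemma mem_auxComap (f : A →+* B) (P : TwoSidedIdeal B) (a : A) :
    a ∈ auxComap f P ↔ f a ∈ P := by
  rw [auxComap, TwoSidedIdeal.mem_mk']; rfl

/-- Image of a two-sided ideal under a surjective ring hom. -/
def auxMap (f : A →+* B) (hf : Function.Surjective f) (T : TwoSidedIdeal A) :
    TwoSidedIdeal B :=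
  TwoSidedIdeal.mk' (f '' (T : Set A))
    ⟨0, T.zero_mem, map_zero f⟩
    (fun {x y} hx hy => by
      obtain ⟨a, ha, rfl⟩ := hx; obtain ⟨b, hb, rfl⟩ := hy
      exact ⟨a + b, T.add_mem ha hb, map_add f a b⟩)
    (fun {x} hx => by
      obtain ⟨a, ha, rfl⟩ := hx
      exact ⟨-a, T.neg_mem ha, map_neg f a⟩)
    (fun {x y} hy => by
      obtain ⟨b, hb, rfl⟩ := hy
      obtain ⟨c, rfl⟩ := hf x
      exact ⟨c * b, T.mul_mem_left c b hb, map_mul f c b⟩)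
    (fun {x y} hx => by
      obtain ⟨a, ha, rfl⟩ := hx
      obtain ⟨c, rfl⟩ := hf y
      exact ⟨a * c, T.mul_mem_right a c ha, map_mul f a c⟩)

lemma mem_auxMap (f : A →+* B) (hf : Function.Surjective f) (T : TwoSidedIdeal A) (b : B) :
    b ∈ auxMap f hf T ↔ b ∈ f '' (T : Set A) := by
  exact TwoSidedIdeal.mem_mk' _ _ _ _ _ _ b

/-- Pullback of a prime along a surjective ring hom is prime. -/
lemma auxComap_prime (f : A →+* B) (hf : Function.Surjective f) (P : TwoSidedIdeal B)
    (hP : IsPrimeTwoSided P) : IsPrimeTwoSided (auxComap f P) := by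
  constructor
  · intro htop
    have h1 : (1 : A) ∈ auxComap f P := htop ▸ trivial
    have : (1 : B) ∈ P := by have := (mem_auxComap f P 1).1 h1; rwa [map_one] at this
    exact hP.1 (P.eq_top this)
  · intro I₁ J₁ hmul
    have hIm : ∀ a ∈ I₁, ∀ b ∈ J₁, ∀ x ∈ auxMap f hf I₁, ∀ y ∈ auxMap f hf J₁, x * y ∈ P := by
      intro _ _ _ _ x hx y hy
      rw [mem_auxMap] at hx hy
      obtain ⟨a, ha, rfl⟩ := hx; obtain ⟨b, hb, rfl⟩ := hy
      rw [← map_mul]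
      exact (mem_auxComap f P _).1 (hmul a ha b hb)
    rcases hP.2 (auxMap f hf I₁) (auxMap f hf J₁)
      (fun x hx y hy => hIm 0 I₁.zero_mem 0 J₁.zero_mem x hx y hy) with hle | hle
    · left
      intro a ha
      rw [mem_auxComap]
      exact hle ((mem_auxMap f hf I₁ (f a)).2 ⟨a, ha, rfl⟩)
    · right
      intro a ha
      rw [mem_auxComap]
      exact hle ((mem_auxMap f hf J₁ (f a)).2 ⟨a, ha, rfl⟩)

end Aux

section Aux2

lemma aux_prime_pow {A : Type*} [Ring A] (P : TwoSidedIdeal A) (hP : IsPrimeTwoSided P)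
    (J : TwoSidedIdeal A) :
    ∀ n : ℕ, 0 < n →
      (∀ l : List A, l.length = n → (∀ x ∈ l, x ∈ J) → l.prod ∈ P) → J ≤ P := by
  intro n
  induction n with
  | zero => intro h; exact absurd h (lt_irrefl 0)
  | succ n ih =>
    intro _ h
    rcases Nat.eq_zero_or_pos n with hn | hn
    · subst hn
      intro a ha
      simpa using h [a] rfl (by simpa using ha)
    · set K : TwoSidedIdeal A := TwoSidedIdeal.mk'
        {x | ∀ c : A, ∀ a ∈ J, a * c * x ∈ P}
        (fun c a _ => by simpa using P.zero_mem)
        (fun {x y} hx hy c a haJ => by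
          rw [mul_add]; exact P.add_mem (hx c a haJ) (hy c a haJ))
        (fun {x} hx c a haJ => by
          rw [mul_neg]; exact P.neg_mem (hx c a haJ))
        (fun {x y} hy c a haJ => by
          have := hy (c * x) a haJ
          rw [show a * c * (x * y) = a * (c * x) * y by simp [mul_assoc]]
          exact this)
        (fun {x y} hx c a haJ => by
          rw [show a * c * (x * y) = a * c * x * y by simp [mul_assoc]]
          exact P.mul_mem_right _ _ (hx c a haJ)) with hK
      have hmem : ∀ x, x ∈ K ↔ ∀ c : A, ∀ a ∈ J, a * c * x ∈ P := by
        intro x; rw [hK]; exact TwoSidedIdeal.mem_mk' _ _ _ _ _ _ x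
      have hJK : ∀ a ∈ J, ∀ b ∈ K, a * b ∈ P := by
        intro a haJ b hbK
        have := (hmem b).1 hbK 1 a haJ
        simpa using this
      rcases hP.2 J K hJK with hle | hle
      · exact hle
      · apply ih hn
        intro l hl hlJ
        apply hle
        rw [hmem]
        intro c a haJ
        have hprod := h ((a * c) :: l) (by simp [hl]) (by
          intro x hx
          rcases List.mem_cons.1 hx with h1 | h2
          · subst h1; exact J.mul_mem_right _ _ haJ
          · exact hlJ x h2)
        simpa [List.prod_cons, mul_assoc] using hprod

lemma aux_rad_nilpotent {A : Type*} [Ring A] (I : TwoSidedIdeal A)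
    (h : NilpotentPrimeRad I.ringCon.Quotient) :
    ∃ n : ℕ, 0 < n ∧ ∀ m : List A, m.length = n →
      (∀ x ∈ m, x ∈ primeRad (I : Set A)) → m.prod ∈ I := by
  obtain ⟨n, hn, hprod⟩ := h
  refine ⟨n, hn, fun m hm hmem => ?_⟩
  set f : A →+* I.ringCon.Quotient := I.ringCon.mk' with hf
  have hfsurj : Function.Surjective f := fun q => Quotient.inductionOn' q fun a => ⟨a, rfl⟩
  have hker : ∀ a : A, f a = 0 ↔ a ∈ I := by
    intro a
    have : f a = f 0 ↔ I.ringCon a 0 := RingCon.eq I.ringCon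
    rw [map_zero] at this
    rw [this, TwoSidedIdeal.mem_iff]
  have key : ∀ x ∈ m, f x ∈ primeRad (∅ : Set I.ringCon.Quotient) := by
    intro x hx Pbar hPbar _
    have hQprime := auxComap_prime f hfsurj Pbar hPbar
    have hIQ : (I : Set A) ⊆ ((auxComap f Pbar : TwoSidedIdeal A) : Set A) := by
      intro i hi
      have : f i = 0 := (hker i).2 hi
      have : f i ∈ Pbar := by rw [this]; exact Pbar.zero_mem
      exact (mem_auxComap f Pbar i).2 this
    have := hmem x hx (auxComap f Pbar) hQprime hIQ
    exact (mem_auxComap f Pbar x).1 this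
  have hmap : (m.map f).prod = 0 := by
    apply hprod
    · simp [hm]
    · intro y hy
      rw [List.mem_map] at hy
      obtain ⟨x, hx, rfl⟩ := hy
      exact key x hx
  rw [← map_list_prod] at hmap
  exact (hker m.prod).1 hmap

lemma aux_key {S : Type*} [Ring S] (R : Subring S) (I : TwoSidedIdeal R) (n : ℕ)
    (hn : 0 < n)
    (hprod : ∀ m : List R, m.length = n → (∀ x ∈ m, x ∈ primeRad (I : Set R)) → m.prod ∈ I) :
    ∀ l : List S, l.length = n → (∀ a ∈ l, a ∈ extSub R (primeRad (I : Set R))) →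
      l.prod ∈ extSub R (I : Set R) := by
  set N : Set R := primeRad (I : Set R) with hN
  set U : ℕ → Set S := fun k =>
    {t : S | ∃ (c : S) (m : List R), m.length = k ∧ (∀ x ∈ m, x ∈ N) ∧
      t = c * ((m.prod : R) : S)} with hU
  -- extSub N absorbs right multiplication
  have habs : ∀ a ∈ extSub R N, ∀ r : S, a * r ∈ extSub R N := by
    intro a ha r s
    rw [mul_assoc]
    exact ha (r * s)
  -- multiplying a span element of `val '' N` against a coerced product
  have hmul2 : ∀ (k : ℕ) (m : List R), m.length = k → (∀ x ∈ m, x ∈ N) →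
      ∀ b ∈ Ideal.span (Subtype.val '' N), b * ((m.prod : R) : S) ∈ Ideal.span (U (k + 1)) := by
    intro k m hm hmN b hb
    induction hb using Submodule.span_induction with
    | mem b hbmem =>
      obtain ⟨x, hxN, rfl⟩ := hbmem
      apply Ideal.subset_span
      refine ⟨1, x :: m, by simp [hm], ?_, ?_⟩
      · intro y hy
        rcases List.mem_cons.1 hy with h1 | h2
        · subst h1; exact hxN
        · exact hmN y h2
      · rw [List.prod_cons]
        push_cast
        rw [one_mul]
    | zero => simpa using Ideal.zero_mem _
    | add b1 b2 hb1 hb2 ih1 ih2 =>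
      rw [add_mul]
      exact Submodule.add_mem _ ih1 ih2
    | smul r b hbmem ihb =>
      rw [smul_eq_mul, mul_assoc]
      exact Submodule.smul_mem _ r ihb
  -- step lemma
  have hstep : ∀ (k : ℕ) (z : S), z ∈ Ideal.span (U k) →
      ∀ a ∈ extSub R N, a * z ∈ Ideal.span (U (k + 1)) := by
    intro k z hz
    induction hz using Submodule.span_induction with
    | mem t ht =>
      intro a ha
      obtain ⟨c, m, hm, hmN, rfl⟩ := ht
      rw [← mul_assoc]
      have hac : a * c ∈ Ideal.span (Subtype.val '' N) := by
        simpa using habs a ha c 1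
      exact hmul2 k m hm hmN (a * c) hac
    | zero => intro a _; simpa using Ideal.zero_mem _
    | add z1 z2 hz1 hz2 ih1 ih2 =>
      intro a ha
      rw [mul_add]
      exact Submodule.add_mem _ (ih1 a ha) (ih2 a ha)
    | smul r z hzk ihz =>
      intro a ha
      rw [smul_eq_mul, ← mul_assoc]
      exact ihz (a * r) (habs a ha r)
  -- main list lemma
  have hlist : ∀ l : List S, l ≠ [] → (∀ a ∈ l, a ∈ extSub R N) →
      ∀ s : S, l.prod * s ∈ Ideal.span (U l.length) := by
    intro l
    induction l with
    | nil => intro h; exact absurd rfl h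
    | cons a l ih =>
      intro _ hmem s
      by_cases hl : l = []
      · subst hl
        have has : a * s ∈ Ideal.span (Subtype.val '' N) := hmem a (by simp) s
        have hsub : Ideal.span (Subtype.val '' N) ≤ Ideal.span (U 1) := by
          apply Ideal.span_mono
          rintro t ⟨x, hxN, rfl⟩
          exact ⟨1, [x], rfl, by simpa using hxN, by simp⟩
        simpa [List.prod_cons] using hsub has
      · have hcons : (a :: l).prod * s = a * (l.prod * s) := by
          rw [List.prod_cons, mul_assoc]
        rw [hcons]
        have ihl := ih hl (fun x hx => hmem x (List.mem_cons_of_mem a hx)) s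
        have := hstep l.length _ ihl a (hmem a (by simp))
        simpa using this
  -- conclude
  intro l hlen hmem s
  have hne : l ≠ [] := by
    intro h; subst h; simp at hlen; omega
  have hin := hlist l hne hmem s
  rw [hlen] at hin
  have hle : Ideal.span (U n) ≤ Ideal.span (Subtype.val '' (I : Set R)) := by
    rw [Ideal.span_le]
    rintro t ⟨c, m, hm, hmN, rfl⟩
    have hmI : m.prod ∈ I := hprod m hm hmN
    have : ((m.prod : R) : S) ∈ Ideal.span (Subtype.val '' (I : Set R)) :=
      Ideal.subset_span ⟨m.prod, hmI, rfl⟩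
    simpa using Submodule.smul_mem _ c this
  exact hle hin

end Aux2

/-- Let `R` be a subring of `S`, with the Goldie/nilpotence
hypotheses of (3.7). Then for every ideal `I` of `R`, `V_S(I^S) = V_S((√I)^S)`; that
is, the functor `ρ` sends the closed set `V_R(I)` to `V_S(I^S)`. -/
theorem statement_11 {S : Type*} [Ring S] (R : Subring S)
    (hRG : SemiprimeFactorsGoldie R) (hSG : SemiprimeFactorsGoldie S)
    (hRN : FactorRadsNilpotent R) (hSN : FactorRadsNilpotent S) :
    ∀ I : TwoSidedIdeal R,
      zarV (extSub R (I : Set R)) = zarV (extSub R (primeRad (I : Set R))) := by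
  intro I
  set N : Set R := primeRad (I : Set R) with hNdef
  have hsub : (I : Set R) ⊆ N := fun x hx P hP hIP => hIP hx
  have hmono : extSub R (I : Set R) ⊆ extSub R N := fun a ha s =>
    Ideal.span_mono (Set.image_mono hsub) (ha s)
  apply Set.Subset.antisymm
  · -- hard direction: any prime containing `I^S` contains `(√I)^S`
    rintro P ⟨hpr, hcont⟩
    refine ⟨hpr, ?_⟩
    obtain ⟨n, hn, hprod⟩ := aux_rad_nilpotent I (hRN I)
    -- `extSub R N` is a two-sided ideal of `S`
    set J : TwoSidedIdeal S := TwoSidedIdeal.mk' (extSub R N)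
      (fun s => by rw [zero_mul]; exact Ideal.zero_mem _)
      (fun {x y} hx hy s => by rw [add_mul]; exact Submodule.add_mem _ (hx s) (hy s))
      (fun {x} hx s => by rw [neg_mul]; exact Submodule.neg_mem _ (hx s))
      (fun {x y} hy s => by
        rw [mul_assoc]
        simpa using Submodule.smul_mem _ x (hy s))
      (fun {x y} hx s => by rw [mul_assoc]; exact hx (y * s)) with hJ
    have hJmem : ∀ x, x ∈ J ↔ x ∈ extSub R N := by
      intro x; rw [hJ]; exact TwoSidedIdeal.mem_mk' _ _ _ _ _ _ x
    have hJP : J ≤ P := by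
      apply aux_prime_pow P hpr J n hn
      intro l hl hlJ
      exact hcont (aux_key R I n hn hprod l hl (fun a ha => (hJmem a).1 (hlJ a ha)))
    intro a ha
    exact hJP ((hJmem a).2 ha)
  · -- easy direction: `I^S ⊆ (√I)^S`
    rintro P ⟨hpr, hcont⟩
    exact ⟨hpr, fun a ha => hcont (hmono ha)⟩
end

section
/- Let R be a subring of a ring S, and assume that every semiprime factor ring of R and of S is left or right Goldie and that the prime radical of every factor ring of R and of S is nilpotent. Then λ is a left adjoint to ρ if and only if for all ideals I of R and J of S, one has I^S ⊆ √J if and only if I ⊆ √(J ∩ R). -/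
namespace St12

variable {A : Type*} [Ring A]

lemma primeRad_mono {X Y : Set A} (h : X ⊆ Y) : primeRad X ⊆ primeRad Y :=
  fun _ ha P hP hYP => ha P hP (h.trans hYP)

lemma subset_primeRad (X : Set A) : X ⊆ primeRad X := fun _ ha _ _ hXP => hXP ha

lemma primeRad_le {X : Set A} {P : TwoSidedIdeal A} (hP : IsPrimeTwoSided P)
    (h : X ⊆ (P : Set A)) : primeRad X ⊆ (P : Set A) := fun _ ha => ha P hP h

lemma primeRad_primeRad (X : Set A) : primeRad (primeRad X) = primeRad X :=
  Set.Subset.antisymm (fun a ha P hP hXP => ha P hP (primeRad_le hP hXP))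
    (subset_primeRad _)

lemma zarV_subset_iff {X Y : Set A} : zarV X ⊆ zarV Y ↔ Y ⊆ primeRad X := by
  constructor
  · intro h y hy P hP hXP
    exact (h ⟨hP, hXP⟩).2 hy
  · intro h P hP
    exact ⟨hP.1, h.trans (primeRad_le hP.1 hP.2)⟩

/-- The prime radical as a two-sided ideal. -/
def radIdeal (X : Set A) : TwoSidedIdeal A :=
  TwoSidedIdeal.mk' (primeRad X)
    (fun P _ _ => P.zero_mem)
    (fun hx hy P hP hXP => P.add_mem (hx P hP hXP) (hy P hP hXP))
    (fun hx P hP hXP => P.neg_mem (hx P hP hXP))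
    (fun hy P hP hXP => P.mul_mem_left _ _ (hy P hP hXP))
    (fun hx P hP hXP => P.mul_mem_right _ _ (hx P hP hXP))

@[simp] lemma coe_radIdeal (X : Set A) : ((radIdeal X : TwoSidedIdeal A) : Set A) = primeRad X :=
  TwoSidedIdeal.coe_mk' _ _ _ _ _ _

@[simp] lemma mem_radIdeal {X : Set A} {x : A} : x ∈ radIdeal X ↔ x ∈ primeRad X :=
  TwoSidedIdeal.mem_mk' _ _ _ _ _ _ _

lemma eq_top_of_one_mem {P : TwoSidedIdeal A} (h : (1 : A) ∈ P) : P = ⊤ := by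
  rw [eq_top_iff]
  intro x _
  simpa using P.mul_mem_left x 1 h

section comap

variable {B : Type*} [Ring B] (f : A →+* B)

/-- Preimage of a two-sided ideal. -/
def comapIdeal (I : TwoSidedIdeal B) : TwoSidedIdeal A :=
  TwoSidedIdeal.mk' (f ⁻¹' (I : Set B))
    (by simp [Set.mem_preimage, I.zero_mem])
    (fun hx hy => by simpa using I.add_mem hx hy)
    (fun hx => by simpa using I.neg_mem hx)
    (fun {x y} hy => by simpa using I.mul_mem_left (f x) (f y) hy)
    (fun {x y} hx => by simpa using I.mul_mem_right (f x) (f y) hx)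

@[simp] lemma mem_comapIdeal {I : TwoSidedIdeal B} {x : A} :
    x ∈ comapIdeal f I ↔ f x ∈ I :=
  TwoSidedIdeal.mem_mk' _ _ _ _ _ _ _

/-- Image of a two-sided ideal under a surjective ring hom. -/
def mapIdeal (hf : Function.Surjective f) (I : TwoSidedIdeal A) : TwoSidedIdeal B :=
  TwoSidedIdeal.mk' (f '' (I : Set A))
    ⟨0, I.zero_mem, map_zero f⟩
    (fun {x y} hx hy => by
      obtain ⟨a, ha, rfl⟩ := hx; obtain ⟨b, hb, rfl⟩ := hy
      exact ⟨a + b, I.add_mem ha hb, map_add f a b⟩)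
    (fun {x} hx => by
      obtain ⟨a, ha, rfl⟩ := hx
      exact ⟨-a, I.neg_mem ha, map_neg f a⟩)
    (fun {x y} hy => by
      obtain ⟨b, hb, rfl⟩ := hy; obtain ⟨a, rfl⟩ := hf x
      exact ⟨a * b, I.mul_mem_left a b hb, map_mul f a b⟩)
    (fun {x y} hx => by
      obtain ⟨a, ha, rfl⟩ := hx; obtain ⟨b, rfl⟩ := hf y
      exact ⟨a * b, I.mul_mem_right a b ha, map_mul f a b⟩)

@[simp] lemma mem_mapIdeal {hf : Function.Surjective f} {I : TwoSidedIdeal A} {y : B} :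
    y ∈ mapIdeal f hf I ↔ y ∈ f '' (I : Set A) :=
  TwoSidedIdeal.mem_mk' _ _ _ _ _ _ _

lemma comapIdeal_prime (hf : Function.Surjective f) {P : TwoSidedIdeal B}
    (hP : IsPrimeTwoSided P) : IsPrimeTwoSided (comapIdeal f P) := by
  constructor
  · intro h
    apply hP.1
    apply eq_top_of_one_mem
    have : (1 : A) ∈ comapIdeal f P := h ▸ TwoSidedIdeal.mem_top _
    simpa using (mem_comapIdeal f).1 this
  · intro I J h
    have hcond : ∀ a ∈ mapIdeal f hf I, ∀ b ∈ mapIdeal f hf J, a * b ∈ P := by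
      intro a ha b hb
      obtain ⟨x, hx, rfl⟩ := (mem_mapIdeal f).1 ha
      obtain ⟨y, hy, rfl⟩ := (mem_mapIdeal f).1 hb
      rw [← map_mul]
      exact (mem_comapIdeal f).1 (h x hx y hy)
    rcases hP.2 (mapIdeal f hf I) (mapIdeal f hf J) hcond with h' | h'
    · left
      intro x hx
      exact (mem_comapIdeal f).2 <| h' <| (mem_mapIdeal f).2 ⟨x, hx, rfl⟩
    · right
      intro x hx
      exact (mem_comapIdeal f).2 <| h' <| (mem_mapIdeal f).2 ⟨x, hx, rfl⟩

end comap

end St12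

namespace St12

variable {A : Type*} [Ring A]

lemma mem_rad_quot {I : TwoSidedIdeal A} {x : A} (hx : x ∈ primeRad (I : Set A)) :
    (RingCon.mk' I.ringCon x) ∈ primeRad (∅ : Set I.ringCon.Quotient) := by
  intro P hP _
  have hsurj : Function.Surjective (RingCon.mk' I.ringCon) := Quotient.mk''_surjective
  have hIC : (I : Set A) ⊆ ((comapIdeal (RingCon.mk' I.ringCon) P : TwoSidedIdeal A) : Set A) := by
    intro a ha
    have h0 : (RingCon.mk' I.ringCon) a = 0 := by
      show (a : I.ringCon.Quotient) = 0
      rw [← I.ringCon.coe_zero]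
      exact (RingCon.eq _).2 ((TwoSidedIdeal.mem_iff _ _).1 ha)
    show a ∈ comapIdeal (RingCon.mk' I.ringCon) P
    rw [mem_comapIdeal, h0]
    exact P.zero_mem
  exact (mem_comapIdeal _).1 (hx _ (comapIdeal_prime _ hsurj hP) hIC)

lemma pow_mem_of_rad (I : TwoSidedIdeal A) (hN : NilpotentPrimeRad I.ringCon.Quotient) :
    ∃ n, 0 < n ∧ ∀ l : List A, l.length = n →
      (∀ x ∈ l, x ∈ primeRad (I : Set A)) → l.prod ∈ I := by
  obtain ⟨n, hn, h⟩ := hN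
  refine ⟨n, hn, fun l hl hm => ?_⟩
  have h0 := h (l.map (RingCon.mk' I.ringCon)) (by simp [hl]) (by
    intro y hy
    obtain ⟨a, ha, rfl⟩ := List.mem_map.1 hy
    exact mem_rad_quot (hm a ha))
  rw [← map_list_prod] at h0
  rw [TwoSidedIdeal.mem_iff]
  refine (RingCon.eq _).1 ?_
  rw [I.ringCon.coe_zero]
  exact h0

/-- If all products of `n ≥ 1` elements of `E` lie in the prime `P`, then `E ≤ P`. -/
lemma le_of_pow_le {P : TwoSidedIdeal A} (hP : IsPrimeTwoSided P) (E : TwoSidedIdeal A) :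
    ∀ n : ℕ, 0 < n →
      (∀ l : List A, l.length = n → (∀ x ∈ l, x ∈ E) → l.prod ∈ P) → E ≤ P := by
  intro n
  induction n with
  | zero => omega
  | succ m ih =>
    intro _ H
    by_cases hm : m = 0
    · subst hm
      intro x hx
      have := H [x] rfl (by simpa using hx)
      simpa using this
    · have hm' : 0 < m := Nat.pos_of_ne_zero hm
      set Q : TwoSidedIdeal A := TwoSidedIdeal.mk' {a | ∀ s : A, ∀ b ∈ E, a * s * b ∈ P}
        (fun s b hb => by simpa using P.zero_mem)
        (fun {x y} hx hy s b hb => by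
          rw [add_mul, add_mul]
          exact P.add_mem (hx s b hb) (hy s b hb))
        (fun {x} hx s b hb => by
          rw [neg_mul, neg_mul]
          exact P.neg_mem (hx s b hb))
        (fun {x y} hy s b hb => by
          rw [mul_assoc, mul_assoc]
          exact P.mul_mem_left _ _ (by rw [← mul_assoc]; exact hy s b hb))
        (fun {x y} hx s b hb => by
          rw [mul_assoc x y s]
          exact hx (y * s) b hb) with hQdef
      have hQmem : ∀ a : A, a ∈ Q ↔ ∀ s : A, ∀ b ∈ E, a * s * b ∈ P := fun a =>
        TwoSidedIdeal.mem_mk' _ _ _ _ _ _ _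
      have hcond : ∀ a ∈ Q, ∀ b ∈ E, a * b ∈ P := by
        intro a ha b hb
        have := (hQmem a).1 ha 1 b hb
        simpa using this
      rcases hP.2 Q E hcond with h' | h'
      · refine ih hm' ?_
        intro l hl hmem
        refine h' ((hQmem l.prod).2 ?_)
        intro s b hb
        have hne : l ≠ [] := by
          intro h0; rw [h0] at hl; simp at hl; omega
        set g := l.getLast hne with hg
        have hsplit : l.dropLast ++ [g] = l := List.dropLast_append_getLast hne
        have hlen : (l.dropLast ++ [g * s, b]).length = m + 1 := by
          simp [List.length_dropLast, hl]
          omega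
        have hmem2 : ∀ x ∈ l.dropLast ++ [g * s, b], x ∈ E := by
          intro x hx
          rcases List.mem_append.1 hx with hx | hx
          · exact hmem x (List.dropLast_subset l hx)
          · simp only [List.mem_cons, List.mem_singleton, List.not_mem_nil, or_false] at hx
            rcases hx with rfl | rfl
            · exact E.mul_mem_right _ _ (hmem g (List.getLast_mem hne))
            · exact hb
        have hprod := H _ hlen hmem2
        have : (l.dropLast ++ [g * s, b]).prod = l.prod * s * b := by
          conv_rhs => rw [← hsplit]
          simp [List.prod_append, mul_assoc]
        rwa [this] at hprod
      · exact h'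

end St12

namespace St12

variable {S : Type*} [Ring S] (R : Subring S)

lemma extSub_mono {X Y : Set R} (h : X ⊆ Y) : extSub R X ⊆ extSub R Y :=
  fun _ ha s => Ideal.span_mono (Set.image_mono h) (ha s)

lemma mul_val_mem_span {X : Set R} {v : S} (hv : v ∈ Ideal.span (Subtype.val '' X))
    (T : Set R) {t : R} (ht : t ∈ T) :
    v * (t : S) ∈ Ideal.span (Subtype.val '' {z : R | ∃ y ∈ X, ∃ t' ∈ T, z = y * t'}) := by
  induction hv using Submodule.span_induction with
  | mem x hx =>
    obtain ⟨y, hy, rfl⟩ := hx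
    have : (y : S) * (t : S) = ((y * t : R) : S) := by push_cast; ring
    rw [this]
    exact Ideal.subset_span ⟨y * t, ⟨y, hy, t, ht, rfl⟩, rfl⟩
  | zero => simp
  | add x y hx hy ihx ihy => rw [add_mul]; exact Submodule.add_mem _ ihx ihy
  | smul a x hx ih =>
    rw [smul_eq_mul, mul_assoc]
    exact Ideal.mul_mem_left _ a ih

lemma extMul {X T : Set R} :
    ∀ u ∈ Ideal.span (Subtype.val '' T), ∀ a : S,
      (∀ s : S, a * s ∈ Ideal.span (Subtype.val '' X)) →
      a * u ∈ Ideal.span (Subtype.val '' {z : R | ∃ y ∈ X, ∃ t ∈ T, z = y * t}) := by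
  intro u hu
  induction hu using Submodule.span_induction with
  | mem x hx =>
    intro a ha
    obtain ⟨t, ht, rfl⟩ := hx
    have ha' : a ∈ Ideal.span (Subtype.val '' X) := by simpa using ha 1
    exact mul_val_mem_span R ha' T ht
  | zero => intro a _; simp
  | add x y hx hy ihx ihy =>
    intro a ha
    rw [mul_add]
    exact Submodule.add_mem _ (ihx a ha) (ihy a ha)
  | smul s x hx ih =>
    intro a ha
    rw [smul_eq_mul, ← mul_assoc]
    exact ih (a * s) (fun s' => by rw [mul_assoc]; exact ha _)

/-- `prodSet X T m` : products of `m` elements of `X` times an element of `T`. -/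
def prodSet (X T : Set R) : ℕ → Set R
  | 0 => T
  | m + 1 => {z : R | ∃ y ∈ X, ∃ t ∈ prodSet X T m, z = y * t}

lemma list_extMul (X T : Set R) :
    ∀ l : List S, (∀ a ∈ l, ∀ s : S, a * s ∈ Ideal.span (Subtype.val '' X)) →
      ∀ u ∈ Ideal.span (Subtype.val '' T),
        l.prod * u ∈ Ideal.span (Subtype.val '' (prodSet R X T l.length)) := by
  intro l
  induction l with
  | nil => intro _ u hu; simpa [prodSet] using hu
  | cons a l ih =>
    intro h u hu
    have h1 := ih (fun b hb => h b (List.mem_cons_of_mem a hb)) u hu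
    rw [List.prod_cons, mul_assoc]
    exact extMul R _ h1 a (h a List.mem_cons_self)

lemma prodSet_prod (X : Set R) :
    ∀ m, ∀ z ∈ prodSet R X X m, ∃ lst : List R, lst.length = m + 1 ∧
      (∀ x ∈ lst, x ∈ X) ∧ lst.prod = z := by
  intro m
  induction m with
  | zero =>
    intro z hz
    exact ⟨[z], rfl, by simpa [prodSet] using hz, by simp⟩
  | succ m ih =>
    intro z hz
    obtain ⟨y, hy, t, ht, rfl⟩ := hz
    obtain ⟨lst, hlen, hmem, hprod⟩ := ih t ht
    refine ⟨y :: lst, by simp [hlen], ?_, by simp [List.prod_cons, hprod]⟩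
    intro x hx
    rcases List.mem_cons.1 hx with rfl | hx
    · exact hy
    · exact hmem x hx

lemma extSub_rad_le (hRN : FactorRadsNilpotent R) (I : TwoSidedIdeal R)
    {P : TwoSidedIdeal S} (hP : IsPrimeTwoSided P)
    (hIP : extSub R ((I : TwoSidedIdeal R) : Set R) ⊆ (P : Set S)) :
    extSub R (primeRad ((I : TwoSidedIdeal R) : Set R)) ⊆ (P : Set S) := by
  obtain ⟨n, hn, hpow⟩ := pow_mem_of_rad I (hRN I)
  set X := primeRad ((I : TwoSidedIdeal R) : Set R) with hX
  set F : TwoSidedIdeal S := TwoSidedIdeal.mk' (extSub R X)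
    (fun s => by rw [zero_mul]; exact Submodule.zero_mem _)
    (fun {x y} hx hy s => by rw [add_mul]; exact Submodule.add_mem _ (hx s) (hy s))
    (fun {x} hx s => by rw [neg_mul]; exact Submodule.neg_mem _ (hx s))
    (fun {x y} hy s => by rw [mul_assoc]; exact Ideal.mul_mem_left _ x (hy s))
    (fun {x y} hx s => by rw [mul_assoc]; exact hx (y * s)) with hF
  have hFmem : ∀ a : S, a ∈ F ↔ a ∈ extSub R X := fun a => TwoSidedIdeal.mem_mk' _ _ _ _ _ _ _
  have hFP : F ≤ P := by
    apply le_of_pow_le hP F n hn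
    intro l hl hmem
    apply hIP
    intro s
    have hne : l ≠ [] := by intro h0; rw [h0] at hl; simp at hl; omega
    set g := l.getLast hne with hg
    have hsplit : l.dropLast ++ [g] = l := List.dropLast_append_getLast hne
    have hglen : l.dropLast.length = n - 1 := by simp [hl]
    have hgF : ∀ s' : S, g * s' ∈ Ideal.span (Subtype.val '' X) :=
      (hFmem g).1 (hmem g (List.getLast_mem hne))
    have hentries : ∀ a ∈ l.dropLast, ∀ s' : S, a * s' ∈ Ideal.span (Subtype.val '' X) :=
      fun a ha => (hFmem a).1 (hmem a (List.dropLast_subset l ha))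
    have h1 := list_extMul R X X l.dropLast hentries (g * s) (hgF s)
    have h2 : Ideal.span (Subtype.val '' (prodSet R X X l.dropLast.length)) ≤
        Ideal.span (Subtype.val '' ((I : TwoSidedIdeal R) : Set R)) := by
      apply Ideal.span_mono
      apply Set.image_mono
      intro z hz
      obtain ⟨lst, hlen, hmemX, rfl⟩ := prodSet_prod R X _ z hz
      exact hpow lst (by rw [hlen, hglen]; omega) hmemX
    have heq : l.prod * s = l.dropLast.prod * (g * s) := by
      conv_lhs => rw [← hsplit]
      simp [List.prod_append, mul_assoc]
    rw [heq]
    exact h2 h1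
  intro a ha
  exact hFP ((hFmem a).2 ha)

lemma primeRad_restr_rad (hSN : FactorRadsNilpotent S) (J : TwoSidedIdeal S) :
    primeRad (restrSet R (primeRad ((J : TwoSidedIdeal S) : Set S))) =
      primeRad (restrSet R ((J : TwoSidedIdeal S) : Set S)) := by
  apply Set.Subset.antisymm
  · have hsub : restrSet R (primeRad ((J : TwoSidedIdeal S) : Set S)) ⊆
        primeRad (restrSet R ((J : TwoSidedIdeal S) : Set S)) := by
      intro x hx P hP hJP
      obtain ⟨n, hn, hpow⟩ := pow_mem_of_rad J (hSN J)
      set E : TwoSidedIdeal R := comapIdeal (Subring.subtype R) (radIdeal ((J : TwoSidedIdeal S) : Set S)) with hE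
      have hEP : E ≤ P := by
        apply le_of_pow_le hP E n hn
        intro l hl hmem
        apply hJP
        show ((l.prod : R) : S) ∈ ((J : TwoSidedIdeal S) : Set S)
        rw [show ((l.prod : R) : S) = (Subring.subtype R) l.prod from rfl, map_list_prod]
        apply hpow
        · simp [hl]
        · intro y hy
          obtain ⟨a, ha, rfl⟩ := List.mem_map.1 hy
          have h3 := hmem a ha
          rw [hE, mem_comapIdeal] at h3
          exact mem_radIdeal.1 h3
      apply hEP
      rw [hE, mem_comapIdeal]
      exact mem_radIdeal.2 hx
    have := primeRad_mono hsub
    rwa [primeRad_primeRad] at this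
  · exact primeRad_mono (fun x hx => subset_primeRad _ hx)

end St12

open St12 in
/-- Let `R` be a subring of `S`, with the Goldie/nilpotence
hypotheses of (3.7). Then `λ` is a left adjoint to `ρ` if and only if for all ideals
`I` of `R` and `J` of `S`: `I^S ⊆ √J ↔ I ⊆ √(J ∩ R)`. -/
theorem statement_12 {S : Type*} [Ring S] (R : Subring S)
    (hRG : SemiprimeFactorsGoldie R) (hSG : SemiprimeFactorsGoldie S)
    (hRN : FactorRadsNilpotent R) (hSN : FactorRadsNilpotent S) :
    AdjSub R ↔
      ∀ (I : TwoSidedIdeal R) (J : TwoSidedIdeal S),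
        (extSub R (I : Set R) ⊆ primeRad (J : Set S) ↔
          (I : Set R) ⊆ primeRad (restrSet R (J : Set S))) := by
  constructor
  · intro hadj I J
    have hJs : primeRad ((radIdeal (J : Set S) : TwoSidedIdeal S) : Set S) =
        ((radIdeal (J : Set S) : TwoSidedIdeal S) : Set S) := by
      rw [coe_radIdeal]; exact primeRad_primeRad _
    have hIs : primeRad ((radIdeal (I : Set R) : TwoSidedIdeal R) : Set R) =
        ((radIdeal (I : Set R) : TwoSidedIdeal R) : Set R) := by
      rw [coe_radIdeal]; exact primeRad_primeRad _
    have key := hadj (radIdeal (J : Set S)) hJs (radIdeal (I : Set R)) hIs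
    rw [zarV_subset_iff, zarV_subset_iff, coe_radIdeal, coe_radIdeal,
      primeRad_restr_rad R hSN J, primeRad_primeRad] at key
    constructor
    · intro h
      have h2 : extSub R (primeRad (I : Set R)) ⊆ primeRad (J : Set S) := by
        intro a ha P hP hJP
        exact extSub_rad_le R hRN I hP (fun x hx => h hx P hP hJP) ha
      exact (subset_primeRad (I : Set R)).trans (key.2 h2)
    · intro h
      have h1 : primeRad (I : Set R) ⊆ primeRad (restrSet R (J : Set S)) := by
        have := primeRad_mono h
        rwa [primeRad_primeRad] at this
      exact fun a ha => key.1 h1 (extSub_mono R (subset_primeRad _) ha)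
  · intro h J hJ I hI
    rw [zarV_subset_iff, zarV_subset_iff]
    exact (h I J).symm
end

section
/- Let X and Y be topological spaces and let c : X → Y be a (not necessarily continuous) correspondence. Define φ^c on closed subsets of X by φ^c(U) = closure of cU in Y, and φ_c on closed subsets of Y by φ_c(V) = closure of c^{[-1]}V in X. Then the following are equivalent: (i) for all closed U ⊆ X and closed V ⊆ Y, φ^c(U) ⊆ V if and only if U ⊆ φ_c(V) (that is, φ^c is a left adjoint to φ_c as functors between the categories of closed subsets with inclusions as morphisms); (ii) c is continuous, i.e., c^{[-1]}Z is closed in X for every closed Z ⊆ Y. -/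
/-!
For closed `V`, `closure (cU) ⊆ V ↔ cU ⊆ V ↔ U ⊆ c^{[-1]}V`, so the closure operators form an
adjunction exactly when closing `c^{[-1]}V` changes nothing. Conversely, applying the adjunction to
`U = φ_c Z ⊆ φ_c Z` gives `c (closure c^{[-1]}Z) ⊆ Z`, i.e. `c^{[-1]}Z` is closed.
-/

theorem Set.biUnion_subset_iff_subset_setOf_subset {X Y : Type*} {c : X → Set Y} {U : Set X}
    {V : Set Y} : ⋃ u ∈ U, c u ⊆ V ↔ U ⊆ {x | c x ⊆ V} :=
  Set.iUnion₂_subset_iff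

theorem closure_biUnion_subset_iff_subset_closure_setOf {X Y : Type*} [TopologicalSpace X]
    [TopologicalSpace Y] {c : X → Set Y} {U : Set X} {V : Set Y} (hV : IsClosed V)
    (hc : IsClosed {x | c x ⊆ V}) :
    closure (⋃ u ∈ U, c u) ⊆ V ↔ U ⊆ closure {x | c x ⊆ V} := by
  rw [hV.closure_subset_iff, hc.closure_eq, Set.biUnion_subset_iff_subset_setOf_subset]

/-- Let `X`, `Y` be topological spaces and `c : X → Set Y` a (not
necessarily continuous) correspondence; write `cU = ⋃_{u ∈ U} c u` and
`c^{[-1]}V = {x | c x ⊆ V}`. Define `φ^c(U) = closure (cU)` for closed `U ⊆ X` and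
`φ_c(V) = closure (c^{[-1]}V)` for closed `V ⊆ Y`. Then `φ^c` is a left adjoint to
`φ_c` (i.e. `φ^c(U) ⊆ V ↔ U ⊆ φ_c(V)` for all closed `U`, `V`) if and only if `c` is
continuous (i.e. `c^{[-1]}Z` is closed for every closed `Z ⊆ Y`). -/
theorem statement_13 {X Y : Type*} [TopologicalSpace X] [TopologicalSpace Y]
    (c : X → Set Y) :
    (∀ U : Set X, IsClosed U → ∀ V : Set Y, IsClosed V →
      (closure (⋃ u ∈ U, c u) ⊆ V ↔ U ⊆ closure {x | c x ⊆ V})) ↔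
    (∀ Z : Set Y, IsClosed Z → IsClosed {x | c x ⊆ Z}) := by
  refine ⟨fun hadj Z hZ => ?_,
    fun hc U _ V hV => closure_biUnion_subset_iff_subset_closure_setOf hV (hc V hV)⟩
  have hclosure : closure {x | c x ⊆ Z} ⊆ {x | c x ⊆ Z} := by
    rw [← Set.biUnion_subset_iff_subset_setOf_subset, ← hZ.closure_subset_iff]
    exact (hadj _ isClosed_closure Z hZ).mpr subset_rfl
  exact isClosed_of_closure_subset hclosure
end
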